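/- arXiv:math/0409249 — 7 statements merged into one kernel-verified Lean document; each statement's English description precedes it below -/
import Mathlib

section
/- Optimality of the logarithmic Sobolev constant on the circle: let L > 0. For every ε > 0 there exists a smooth L-periodic function u : ℝ → ℝ with u' not identically zero such that ∫₀ᴸ u(x)² · log( u(x)² / ‖u‖²_{L²(S¹)} ) dx > 0 and ∫₀ᴸ (u'(x))² dx < (2π²/L² + ε) · ∫₀ᴸ u(x)² · log( u(x)² / ‖u‖²_{L²(S¹)} ) dx. Hence the constant 2π²/L² in the logarithmic Sobolev inequality on S¹ is optimal. -/
set_option maxHeartbeats 1000000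
open Real


lemma hasDerivAt_sin_omega (ω x : ℝ) :
    HasDerivAt (fun x => Real.sin (ω * x)) (ω * Real.cos (ω * x)) x := by
  have h1 : HasDerivAt (fun x : ℝ => ω * x) ω x := by
    simpa using (hasDerivAt_id x).const_mul ω
  simpa [Function.comp_def, mul_comm] using (Real.hasDerivAt_sin (ω * x)).comp x h1

lemma icos1 {L ω : ℝ} (hω : ω ≠ 0) (hS : Real.sin (ω * L) = 0) :
    ∫ x in (0:ℝ)..L, Real.cos (ω * x) = 0 := by
  have h : ∀ x ∈ Set.uIcc (0:ℝ) L, HasDerivAt (fun x => Real.sin (ω * x) / ω)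
      (Real.cos (ω * x)) x := by
    intro x _
    have := (hasDerivAt_sin_omega ω x).div_const ω
    simpa [mul_div_assoc, mul_div_cancel_left₀ _ hω] using this
  rw [intervalIntegral.integral_eq_sub_of_hasDerivAt h
    (Continuous.intervalIntegrable (by continuity) _ _)]
  simp [hS]

lemma icos2 {L ω : ℝ} (hω : ω ≠ 0) (hS : Real.sin (2 * (ω * L)) = 0) :
    ∫ x in (0:ℝ)..L, Real.cos (ω * x) ^ 2 = L / 2 := by
  have h : ∀ x ∈ Set.uIcc (0:ℝ) L, HasDerivAt
      (fun x => x / 2 + Real.sin (2 * ω * x) / (4 * ω))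
      (Real.cos (ω * x) ^ 2) x := by
    intro x _
    have h1 := ((hasDerivAt_id x).div_const 2).add
      ((hasDerivAt_sin_omega (2 * ω) x).div_const (4 * ω))
    refine h1.congr_deriv (Eq.symm ?_)
    rw [Real.cos_sq, show 2 * ω * x = 2 * (ω * x) by ring]
    field_simp
    ring
  rw [intervalIntegral.integral_eq_sub_of_hasDerivAt h
    (Continuous.intervalIntegrable (by continuity) _ _)]
  rw [show 2 * ω * L = 2 * (ω * L) by ring, hS]
  simp

lemma icos3 {L ω : ℝ} (hω : ω ≠ 0) (hS : Real.sin (ω * L) = 0) :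
    ∫ x in (0:ℝ)..L, Real.cos (ω * x) ^ 3 = 0 := by
  have h : ∀ x ∈ Set.uIcc (0:ℝ) L, HasDerivAt
      (fun x => Real.sin (ω * x) / ω - Real.sin (ω * x) ^ 3 / (3 * ω))
      (Real.cos (ω * x) ^ 3) x := by
    intro x _
    have hsin := hasDerivAt_sin_omega ω x
    have h1 := (hsin.div_const ω).sub ((hsin.pow 3).div_const (3 * ω))
    refine h1.congr_deriv (Eq.symm ?_)
    have hsq : Real.sin (ω * x) ^ 2 = 1 - Real.cos (ω * x) ^ 2 := by
      nlinarith [Real.sin_sq_add_cos_sq (ω * x)]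
    simp only [show (3:ℕ) - 1 = 2 from rfl, Nat.cast_ofNat]
    rw [hsq]
    field_simp
    ring
  rw [intervalIntegral.integral_eq_sub_of_hasDerivAt h
    (Continuous.intervalIntegrable (by continuity) _ _)]
  simp [hS]

lemma isin2 {L ω : ℝ} (hω : ω ≠ 0) (hS : Real.sin (2 * (ω * L)) = 0) :
    ∫ x in (0:ℝ)..L, Real.sin (ω * x) ^ 2 = L / 2 := by
  have key : (fun x => Real.sin (ω * x) ^ 2) = fun x => 1 - Real.cos (ω * x) ^ 2 := by
    funext x; nlinarith [Real.sin_sq_add_cos_sq (ω * x)]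
  rw [key, intervalIntegral.integral_sub intervalIntegrable_const
    (Continuous.intervalIntegrable (by continuity) _ _), icos2 hω hS]
  simp
  ring

lemma integral_trig_poly {L ω : ℝ} (hω : ω ≠ 0) (h1 : Real.sin (ω * L) = 0)
    (h2 : Real.sin (2 * (ω * L)) = 0) (a0 a1 a2 a3 : ℝ) :
    ∫ x in (0:ℝ)..L, (a0 + a1 * Real.cos (ω * x) + a2 * Real.cos (ω * x) ^ 2
      + a3 * Real.cos (ω * x) ^ 3) = a0 * L + a2 * (L / 2) := by
  have c0 : IntervalIntegrable (fun _ : ℝ => a0) MeasureTheory.volume 0 L :=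
    intervalIntegrable_const
  have c1 : IntervalIntegrable (fun x => a1 * Real.cos (ω * x)) MeasureTheory.volume 0 L :=
    Continuous.intervalIntegrable (by continuity) _ _
  have c2 : IntervalIntegrable (fun x => a2 * Real.cos (ω * x) ^ 2) MeasureTheory.volume 0 L :=
    Continuous.intervalIntegrable (by continuity) _ _
  have c3 : IntervalIntegrable (fun x => a3 * Real.cos (ω * x) ^ 3) MeasureTheory.volume 0 L :=
    Continuous.intervalIntegrable (by continuity) _ _
  rw [intervalIntegral.integral_add ((c0.add c1).add c2) c3,
    intervalIntegral.integral_add (c0.add c1) c2,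
    intervalIntegral.integral_add c0 c1,
    intervalIntegral.integral_const_mul, intervalIntegral.integral_const_mul,
    intervalIntegral.integral_const_mul, icos1 hω h1, icos2 hω h2, icos3 hω h1,
    intervalIntegral.integral_const]
  simp
  ring


lemma key_log (s : ℝ) (hs : |s| ≤ 1/2) :
    s + s^2/2 - 4*|s|^3 ≤ (1+s) * Real.log (1+s) := by
  have h1 : |(-s)| < 1 := by rw [abs_neg]; linarith [abs_nonneg s]
  have h2 := Real.abs_log_sub_add_sum_range_le h1 2
  simp only [Finset.sum_range_succ, Finset.sum_range_zero] at h2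
  norm_num at h2
  have h5 : |s|^3/(1 - |s|) ≤ 2 * |s|^3 := by
    rw [div_le_iff₀ (by linarith [abs_nonneg s])]
    nlinarith [abs_nonneg s, pow_nonneg (abs_nonneg s) 3]
  have hle := abs_le.mp h2
  have h8 : Real.log (1+s) ≥ s - s^2/2 - 2*|s|^3 := by linarith [hle.1, hle.2]
  have ha := abs_le.mp hs
  have h9 : (0:ℝ) < 1 + s := by linarith [ha.1]
  have h10 : (1+s) * (s - s^2/2 - 2*|s|^3) ≤ (1+s) * Real.log (1+s) :=
    mul_le_mul_of_nonneg_left h8 (le_of_lt h9)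
  have h11 : s + s^2/2 - 4*|s|^3 ≤ (1+s) * (s - s^2/2 - 2*|s|^3) := by
    have hb : s^2 = |s|^2 := (sq_abs s).symm
    have hc : s^3 ≤ |s|^3 := by rw [← abs_pow]; exact le_abs_self _
    have hd : s * |s|^3 ≤ |s| * |s|^3 :=
      mul_le_mul_of_nonneg_right (le_abs_self s) (by positivity)
    have he : |s| * |s|^3 ≤ (1/2) * |s|^3 :=
      mul_le_mul_of_nonneg_right hs (by positivity)
    nlinarith [abs_nonneg s, pow_nonneg (abs_nonneg s) 3]
  linarith

lemma pointwise_bound (δ N K c : ℝ) (hδ : 0 < δ) (hδ1 : δ ≤ 1/218)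
    (hN : N = 1 + δ^2/2) (hK : K = 1/(2*N) - 12*δ) (hc : |c| ≤ 1) :
    -δ^2/2 + (2*δ - 2*K*δ^3)*c + (δ^2+4*K*δ^2)*c^2 + (4*K*δ^3)*c^3
      ≤ (1+δ*c)^2 * Real.log ((1+δ*c)^2 / N) := by
  have hca := abs_le.mp hc
  have hδle : δ ≤ 1 := by linarith
  have hN1 : (1:ℝ) ≤ N := by rw [hN]; nlinarith
  have hN2 : N ≤ (2:ℝ) := by rw [hN]; nlinarith
  have hN0 : (0:ℝ) < N := by linarith
  set w : ℝ := (1+δ*c)^2 - N with hw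
  have hwval : w = 2*δ*c + δ^2*c^2 - δ^2/2 := by rw [hw, hN]; ring
  have hwabs : |w| ≤ 3*δ := by
    rw [abs_le, hwval]
    constructor <;>
      nlinarith [hca.1, hca.2, sq_nonneg c, sq_nonneg (1-c), sq_nonneg (1+c),
        mul_nonneg hδ.le (sub_nonneg.mpr hca.2), mul_nonneg hδ.le (by linarith [hca.1] : (0:ℝ) ≤ 1 + c)]
  have hwabs' : |w| ≤ 1/2 := by linarith
  have hs : |w/N| ≤ 1/2 := by
    rw [abs_div, abs_of_pos hN0, div_le_iff₀ hN0]
    nlinarith [abs_nonneg w]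
  have hkey := key_log (w/N) hs
  -- multiply by N
  have hkey2 : N * (w/N + (w/N)^2/2 - 4*|w/N|^3) ≤ N * ((1+w/N) * Real.log (1+w/N)) :=
    mul_le_mul_of_nonneg_left hkey hN0.le
  have habsd : |w/N| = |w|/N := by rw [abs_div, abs_of_pos hN0]
  have hL1 : N * (w/N + (w/N)^2/2 - 4*|w/N|^3) = w + w^2/(2*N) - 4*|w|^3/N^2 := by
    rw [habsd]; field_simp
  have h1s : 1 + w/N = (1+δ*c)^2/N := by
    rw [hw]; field_simp; ring
  have hR1 : N * ((1+w/N) * Real.log (1+w/N)) = (1+δ*c)^2 * Real.log ((1+δ*c)^2/N) := by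
    rw [h1s]
    have : N * ((1+δ*c)^2/N * Real.log ((1+δ*c)^2/N)) = (1+δ*c)^2 * Real.log ((1+δ*c)^2/N) := by
      field_simp
    rw [this]
  rw [hL1, hR1] at hkey2
  -- now chain
  have hK0 : (0:ℝ) ≤ K := by
    rw [hK]
    have : (1:ℝ)/4 ≤ 1/(2*N) := by
      rw [div_le_div_iff₀ (by norm_num) (by positivity)]
      linarith
    linarith
  have hcube : |w|^3 ≤ 3*δ*w^2 := by
    have : |w|^3 = |w| * w^2 := by rw [← sq_abs]; ring
    rw [this]
    exact mul_le_mul_of_nonneg_right hwabs (sq_nonneg w)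
  have hA : 4*|w|^3/N^2 ≤ 4*|w|^3 := by
    apply div_le_self (by positivity)
    calc (1:ℝ) = 1^2 := by norm_num
      _ ≤ N^2 := pow_le_pow_left₀ zero_le_one hN1 2
  have step2 : w + K*w^2 ≤ w + w^2/(2*N) - 4*|w|^3/N^2 := by
    have he : w^2/(2*N) - K*w^2 = 12*δ*w^2 := by rw [hK]; field_simp; ring
    have h4 : 4*|w|^3/N^2 ≤ 12*δ*w^2 := le_trans hA (by linarith)
    linarith [he, h4]
  have step3 : -δ^2/2 + (2*δ - 2*K*δ^3)*c + (δ^2+4*K*δ^2)*c^2 + (4*K*δ^3)*c^3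
      ≤ w + K*w^2 := by
    have hid : w + K*w^2 - (-δ^2/2 + (2*δ - 2*K*δ^3)*c + (δ^2+4*K*δ^2)*c^2 + (4*K*δ^3)*c^3)
        = K * (δ^2*(c^2-1/2))^2 := by rw [hwval]; ring
    have h0 : 0 ≤ K * (δ^2*(c^2-1/2))^2 := mul_nonneg hK0 (sq_nonneg _)
    linarith [hid, h0]
  linarith

lemma hasDerivAt_cos_omega (ω x : ℝ) :
    HasDerivAt (fun x => Real.cos (ω * x)) (-(ω * Real.sin (ω * x))) x := by
  have h1 : HasDerivAt (fun x : ℝ => ω * x) ω x := by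
    simpa using (hasDerivAt_id x).const_mul ω
  simpa [Function.comp_def, mul_comm] using (Real.hasDerivAt_cos (ω * x)).comp x h1

/-- Optimality of the constant `2π²/L²` in the logarithmic Sobolev inequality on the
circle of length `L`: for every `ε > 0` there is a smooth `L`-periodic function
`u : ℝ → ℝ` with `u'` not identically zero, whose entropy
`∫₀ᴸ u² log(u² / ‖u‖²_{L²(S¹)}) dx` is positive and such that
`∫₀ᴸ (u')² dx < (2π²/L² + ε) ∫₀ᴸ u² log(u² / ‖u‖²_{L²(S¹)}) dx`. -/
theorem log_sobolev_circle_optimal (L : ℝ) (hL : 0 < L) :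
    ∀ ε > (0:ℝ), ∃ u : ℝ → ℝ,
      ContDiff ℝ (⊤ : ℕ∞) u ∧
      (∀ x : ℝ, u (x + L) = u x) ∧
      (∃ x : ℝ, deriv u x ≠ 0) ∧
      0 < (∫ x in (0:ℝ)..L,
            u x ^ 2 * Real.log (u x ^ 2 / ((1 / L) * ∫ y in (0:ℝ)..L, u y ^ 2))) ∧
      (∫ x in (0:ℝ)..L, (deriv u x) ^ 2)
        < (2 * Real.pi ^ 2 / L ^ 2 + ε) *
          ∫ x in (0:ℝ)..L,
            u x ^ 2 * Real.log (u x ^ 2 / ((1 / L) * ∫ y in (0:ℝ)..L, u y ^ 2)) := by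
  intro ε hε
  have hπ := Real.pi_pos
  obtain ⟨C, hCdef⟩ : ∃ C : ℝ, C = 2 * Real.pi ^ 2 / L ^ 2 := ⟨_, rfl⟩
  rw [← hCdef]
  have hC : 0 < C := by rw [hCdef]; positivity
  have hCε : 0 < C + ε := by linarith
  obtain ⟨η, hηdef⟩ : ∃ η : ℝ, η = min (1/2) (ε / (2 * (C + ε))) := ⟨_, rfl⟩
  have hη : 0 < η := hηdef ▸ lt_min (by norm_num) (by positivity)
  have hη2 : η ≤ 1/2 := hηdef ▸ min_le_left _ _
  have hη3 : η ≤ ε / (2 * (C + ε)) := hηdef ▸ min_le_right _ _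
  obtain ⟨δ, hδdef⟩ : ∃ δ : ℝ, δ = η / 109 := ⟨_, rfl⟩
  have hδ : 0 < δ := by rw [hδdef]; positivity
  have hδ1 : δ ≤ 1/218 := by rw [hδdef]; linarith
  have hδle : δ ≤ 1 := by linarith
  obtain ⟨ω, hωdef⟩ : ∃ ω : ℝ, ω = 2 * Real.pi / L := ⟨_, rfl⟩
  have hω : 0 < ω := by rw [hωdef]; positivity
  have hωL : ω * L = 2 * Real.pi := by rw [hωdef]; field_simp
  have hs1 : Real.sin (ω * L) = 0 := by rw [hωL]; exact Real.sin_two_pi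
  have hs2 : Real.sin (2 * (ω * L)) = 0 := by
    rw [hωL, show 2 * (2 * Real.pi) = 2 * Real.pi + 2 * Real.pi by ring,
      Real.sin_add_two_pi, Real.sin_two_pi]
  obtain ⟨N, hNdef⟩ : ∃ N : ℝ, N = 1 + δ ^ 2 / 2 := ⟨_, rfl⟩
  have hN1 : (1:ℝ) ≤ N := by rw [hNdef]; nlinarith
  have hN2 : N ≤ (2:ℝ) := by rw [hNdef]; nlinarith
  have hN0 : (0:ℝ) < N := by linarith
  obtain ⟨K, hKdef⟩ : ∃ K : ℝ, K = 1 / (2 * N) - 12 * δ := ⟨_, rfl⟩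
  obtain ⟨u, hudef⟩ : ∃ u : ℝ → ℝ, u = fun x => 1 + δ * Real.cos (ω * x) := ⟨_, rfl⟩
  -- continuity and positivity
  have hucont : Continuous u := by
    rw [hudef]
    exact continuous_const.add (continuous_const.mul
      (Real.continuous_cos.comp (continuous_const.mul continuous_id)))
  have hupos : ∀ x, (0:ℝ) < u x := by
    intro x
    have := Real.neg_one_le_cos (ω * x)
    have h2 := mul_le_mul_of_nonneg_left this hδ.le
    simp only [hudef]
    nlinarith
  -- derivative
  have hD : ∀ x, HasDerivAt u (-(δ * (ω * Real.sin (ω * x)))) x := by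
    intro x
    have h := ((hasDerivAt_cos_omega ω x).const_mul δ).const_add 1
    simpa [hudef, mul_comm, mul_left_comm, mul_assoc] using h
  have hD' : ∀ x, deriv u x = -(δ * (ω * Real.sin (ω * x))) := fun x => (hD x).deriv
  -- integral of u^2
  have hI2 : (∫ y in (0:ℝ)..L, u y ^ 2) = L * N := by
    have e : (∫ y in (0:ℝ)..L, u y ^ 2)
        = ∫ x in (0:ℝ)..L, ((1:ℝ) + (2*δ) * Real.cos (ω*x) + δ^2 * Real.cos (ω*x)^2
            + 0 * Real.cos (ω*x)^3) := by
      apply intervalIntegral.integral_congr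
      intro x _
      show u x ^ 2 = _
      rw [hudef]
      ring
    rw [e, integral_trig_poly hω.ne' hs1 hs2, hNdef]
    ring
  have hmean : (1 / L) * (∫ y in (0:ℝ)..L, u y ^ 2) = N := by
    rw [hI2]; field_simp
  -- integral of deriv^2
  have hDI : (∫ x in (0:ℝ)..L, (deriv u x) ^ 2) = C * L * δ ^ 2 := by
    have e : (∫ x in (0:ℝ)..L, (deriv u x) ^ 2)
        = ∫ x in (0:ℝ)..L, (δ^2 * ω^2) * Real.sin (ω*x)^2 := by
      apply intervalIntegral.integral_congr
      intro x _
      show deriv u x ^ 2 = δ^2 * ω^2 * Real.sin (ω*x)^2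
      rw [hD' x]; ring
    rw [e, intervalIntegral.integral_const_mul, isin2 hω.ne' hs2, hCdef, hωdef]
    field_simp
  -- entropy lower bound
  obtain ⟨G, hGdef⟩ : ∃ G : ℝ → ℝ, G = fun x => -δ^2/2 + (2*δ - 2*K*δ^3) * Real.cos (ω*x)
      + (δ^2 + 4*K*δ^2) * Real.cos (ω*x)^2 + (4*K*δ^3) * Real.cos (ω*x)^3 := ⟨_, rfl⟩
  have hGI : (∫ x in (0:ℝ)..L, G x) = 2*K*δ^2*L := by
    rw [hGdef, integral_trig_poly hω.ne' hs1 hs2]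
    ring
  have hFcont : Continuous (fun x => u x ^ 2 * Real.log (u x ^ 2 / N)) := by
    apply Continuous.mul (hucont.pow 2)
    apply Continuous.log ((hucont.pow 2).div_const N)
    intro x
    have := hupos x
    exact (div_pos (pow_pos this 2) hN0).ne'
  have hpt : ∀ x ∈ Set.Icc (0:ℝ) L, G x ≤ u x ^ 2 * Real.log (u x ^ 2 / N) := by
    intro x _
    have := pointwise_bound δ N K (Real.cos (ω*x)) hδ hδ1 hNdef hKdef
      (Real.abs_cos_le_one (ω*x))
    simpa [hGdef, hudef] using this
  have hEnt : 2*K*δ^2*L ≤ ∫ x in (0:ℝ)..L, u x ^ 2 * Real.log (u x ^ 2 / N) := by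
    rw [← hGI]
    apply intervalIntegral.integral_mono_on hL.le
    · rw [hGdef]
      apply Continuous.intervalIntegrable
      have hc : Continuous (fun x : ℝ => Real.cos (ω * x)) :=
        Real.continuous_cos.comp (continuous_const.mul continuous_id)
      exact ((continuous_const.add (continuous_const.mul hc)).add
        (continuous_const.mul (hc.pow 2))).add (continuous_const.mul (hc.pow 3))
    · exact hFcont.intervalIntegrable _ _
    · exact hpt
  -- K positivity & 2K lower bound
  have hKpos : (0:ℝ) < K := by
    rw [hKdef]
    have h13 : (1:ℝ)/4 ≤ 1/(2*N) := by
      rw [div_le_div_iff₀ (by norm_num) (by positivity)]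
      linarith
    linarith
  have h2K : 1 - η ≤ 2*K := by
    have hinv : 1 - δ^2/2 ≤ 1/N := by
      rw [le_div_iff₀ hN0, hNdef]
      nlinarith
    have h2Keq : 2*K = 1/N - 24*δ := by rw [hKdef]; field_simp; ring
    have hδη : 25*δ ≤ η := by rw [hδdef]; linarith
    have hδsq : δ^2/2 ≤ δ := by nlinarith
    linarith
  -- final
  refine ⟨u, ?_, ?_, ?_, ?_, ?_⟩
  · rw [hudef]
    exact contDiff_const.add (contDiff_const.mul
      (Real.contDiff_cos.comp (contDiff_const.mul contDiff_id)))
  · intro x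
    simp only [hudef]
    rw [mul_add, hωL, Real.cos_add_two_pi]
  · refine ⟨L/4, ?_⟩
    rw [hD' (L/4), show ω * (L/4) = Real.pi/2 by rw [hωdef]; field_simp; ring,
      Real.sin_pi_div_two]
    have : 0 < δ * (ω * 1) := by positivity
    intro h
    rw [neg_eq_zero] at h
    linarith [h ▸ this]
  · rw [hmean]
    calc (0:ℝ) < 2*K*δ^2*L := by positivity
      _ ≤ _ := hEnt
  · rw [hmean, hDI]
    have hfrac : (C+ε)*η ≤ ε/2 := by
      have := mul_le_mul_of_nonneg_left hη3 hCε.le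
      calc (C+ε)*η ≤ (C+ε)*(ε/(2*(C+ε))) := this
        _ = ε/2 := by field_simp
    have hcore : C < (C+ε)*(2*K) := by
      have := mul_le_mul_of_nonneg_left h2K hCε.le
      nlinarith
    calc C * L * δ^2 = C * (δ^2*L) := by ring
      _ < ((C+ε)*(2*K)) * (δ^2*L) := by
          exact mul_lt_mul_of_pos_right hcore (by positivity)
      _ = (C+ε) * (2*K*δ^2*L) := by ring
      _ ≤ (C+ε) * (∫ x in (0:ℝ)..L, u x ^ 2 * Real.log (u x ^ 2 / N)) :=
          mul_le_mul_of_nonneg_left hEnt hCε.le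
end

section
/- Optimality of the higher-order logarithmic Sobolev constant on the circle: let L > 0 and n ≥ 1 a natural number. For every ε > 0 there exists a smooth L-periodic function u : ℝ → ℝ with u' not identically zero such that ∫₀ᴸ u(x)² · log( u(x)² / ‖u‖²_{L²(S¹)} ) dx > 0 and ∫₀ᴸ (u^{(n)}(x))² dx < ( (1/2)·(2π/L)^{2n} + ε ) · ∫₀ᴸ u(x)² · log( u(x)² / ‖u‖²_{L²(S¹)} ) dx. Hence the constant (1/2)(2π/L)^{2n} is optimal. -/
open Real intervalIntegral

lemma log_taylor_lb {s : ℝ} (hs : -(1/2) ≤ s) :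
    s - s^2/2 + s^3/3 - s^4 ≤ Real.log (1+s) := by
  set h : ℝ → ℝ := fun t => Real.log (1+t) - (t - t^2/2 + t^3/3 - t^4) with hh
  have hder : ∀ t : ℝ, -(3/4) < t → HasDerivAt h ((3*t^3 + 4*t^4)/(1+t)) t := by
    intro t ht
    have h1 : (0:ℝ) < 1 + t := by linarith
    have hlog : HasDerivAt (fun t : ℝ => Real.log (1+t)) (1/(1+t)) t := by
      have := ((hasDerivAt_id t).const_add 1).log (ne_of_gt h1)
      simpa [one_div] using this
    have hpoly : HasDerivAt (fun t : ℝ => t - t^2/2 + t^3/3 - t^4)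
        (1 - t + t^2 - 4*t^3) t := by
      have := (((hasDerivAt_id t).sub (((hasDerivAt_pow 2 t).div_const 2))).add
        ((hasDerivAt_pow 3 t).div_const 3)).sub (hasDerivAt_pow 4 t)
      exact this.congr_deriv (by norm_num)
    have := hlog.sub hpoly
    exact this.congr_deriv (by field_simp; ring)
  have h0 : h 0 = 0 := by simp [hh]
  rcases le_or_gt 0 s with hs0 | hs0
  · have hmono : MonotoneOn h (Set.Ici (0:ℝ)) := by
      apply monotoneOn_of_deriv_nonneg (convex_Ici 0)
      · intro t ht
        exact ((hder t (by simp at ht; linarith)).continuousAt).continuousWithinAt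
      · intro t ht
        simp only [interior_Ici, Set.mem_Ioi] at ht
        exact ((hder t (by linarith)).differentiableAt).differentiableWithinAt
      · intro t ht
        simp only [interior_Ici, Set.mem_Ioi] at ht
        rw [(hder t (by linarith)).deriv]
        positivity
    have := hmono (Set.mem_Ici.2 le_rfl) (Set.mem_Ici.2 hs0) hs0
    rw [h0] at this
    simpa [hh] using this
  · have hmono : AntitoneOn h (Set.Icc (-(1/2):ℝ) 0) := by
      apply antitoneOn_of_deriv_nonpos (convex_Icc _ _)
      · intro t ht
        exact ((hder t (by simp [Set.mem_Icc] at ht; linarith [ht.1])).continuousAt).continuousWithinAt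
      · intro t ht
        rw [interior_Icc] at ht
        exact ((hder t (by linarith [ht.1])).differentiableAt).differentiableWithinAt
      · intro t ht
        rw [interior_Icc] at ht
        obtain ⟨ht1, ht2⟩ := ht
        rw [(hder t (by linarith)).deriv]
        apply div_nonpos_of_nonpos_of_nonneg
        · have h3 : t^3 ≤ 0 := by nlinarith [sq_nonneg t]
          nlinarith [mul_nonpos_of_nonpos_of_nonneg h3 (by linarith : (0:ℝ) ≤ 3+4*t)]
        · linarith
    have := hmono (Set.mem_Icc.2 ⟨hs, le_of_lt hs0⟩) (Set.mem_Icc.2 ⟨by norm_num, le_rfl⟩) (le_of_lt hs0)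
    rw [h0] at this
    simpa [hh] using this

lemma integral_cos_lin (a b T : ℝ) (ha : a ≠ 0) :
    ∫ x in (0:ℝ)..T, Real.cos (a*x + b) = (Real.sin (a*T+b) - Real.sin b)/a := by
  have key : ∀ x ∈ Set.uIcc (0:ℝ) T,
      HasDerivAt (fun y => Real.sin (a*y+b)/a) (Real.cos (a*x+b)) x := by
    intro x _
    have h1 : HasDerivAt (fun y : ℝ => a*y+b) a x := by
      simpa using ((hasDerivAt_id x).const_mul a).add_const b
    have := (h1.sin).div_const a
    simpa [mul_div_assoc, mul_div_cancel_right₀ _ ha] using this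
  have hint : IntervalIntegrable (fun x => Real.cos (a*x+b)) MeasureTheory.volume 0 T := by
    apply Continuous.intervalIntegrable; fun_prop
  rw [integral_eq_sub_of_hasDerivAt key hint]
  simp [sub_div]

lemma integral_cos_sq_phase (L ω φ : ℝ) (hL : 0 < L) (hω : ω = 2*Real.pi/L) :
    ∫ x in (0:ℝ)..L, Real.cos (ω*x + φ)^2 = L/2 := by
  have hωL : ω * L = 2*Real.pi := by rw [hω]; field_simp
  have hω0 : ω ≠ 0 := by
    rw [hω]; positivity
  have hcongr : Set.EqOn (fun x => Real.cos (ω*x + φ)^2)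
      (fun x => 1/2 + (1/2) * Real.cos ((2*ω)*x + 2*φ)) (Set.uIcc 0 L) := by
    intro x _
    simp only [Real.cos_sq]
    ring_nf
  rw [intervalIntegral.integral_congr hcongr]
  have hi1 : IntervalIntegrable (fun _ : ℝ => (1:ℝ)/2) MeasureTheory.volume 0 L :=
    intervalIntegrable_const
  have hi2 : IntervalIntegrable (fun x => (1/2) * Real.cos ((2*ω)*x + 2*φ)) MeasureTheory.volume 0 L := by
    apply Continuous.intervalIntegrable; fun_prop
  rw [intervalIntegral.integral_add hi1 hi2, intervalIntegral.integral_const_mul,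
    integral_cos_lin _ _ _ (by positivity : (2:ℝ)*ω ≠ 0)]
  have harg : 2*ω*L + 2*φ = (2*φ + 2*Real.pi) + 2*Real.pi := by
    have : 2*(ω*L) = 2*(2*Real.pi) := by rw [hωL]
    linarith
  rw [harg, Real.sin_add_two_pi, Real.sin_add_two_pi]
  simp
  ring

lemma integral_trig_poly_s3 (L ω α β γ : ℝ) (hL : 0 < L) (hω : ω = 2*Real.pi/L) :
    ∫ x in (0:ℝ)..L, (α + β * Real.cos (ω*x) + γ * Real.cos (ω*x)^2)
      = α*L + γ*(L/2) := by
  have hωL : ω * L = 2*Real.pi := by rw [hω]; field_simp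
  have hω0 : ω ≠ 0 := by rw [hω]; positivity
  have hi1 : IntervalIntegrable (fun _ : ℝ => α) MeasureTheory.volume 0 L :=
    intervalIntegrable_const
  have hi2 : IntervalIntegrable (fun x => β * Real.cos (ω*x)) MeasureTheory.volume 0 L := by
    apply Continuous.intervalIntegrable; fun_prop
  have hi3 : IntervalIntegrable (fun x => γ * Real.cos (ω*x)^2) MeasureTheory.volume 0 L := by
    apply Continuous.intervalIntegrable; fun_prop
  have h2 : ∫ x in (0:ℝ)..L, Real.cos (ω*x)^2 = L/2 := by
    have := integral_cos_sq_phase L ω 0 hL hω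
    simpa using this
  have h1 : ∫ x in (0:ℝ)..L, Real.cos (ω*x) = 0 := by
    have := integral_cos_lin ω 0 L hω0
    simpa [hωL, Real.sin_two_pi] using this
  rw [intervalIntegral.integral_add (hi1.add hi2) hi3,
    intervalIntegral.integral_add hi1 hi2,
    intervalIntegral.integral_const_mul, intervalIntegral.integral_const_mul,
    h1, h2]
  simp
  ring

set_option maxHeartbeats 1000000 in
/-- Optimality of the constant `(1/2)(2π/L)^(2n)` in the higher-order logarithmic
Sobolev inequality on the circle of length `L`: for every `ε > 0` there is a smooth
`L`-periodic function `u : ℝ → ℝ` with `u'` not identically zero, whose entropy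
`∫₀ᴸ u² log(u² / ‖u‖²_{L²(S¹)}) dx` is positive and such that
`∫₀ᴸ (u⁽ⁿ⁾)² dx < ((1/2)(2π/L)^(2n) + ε) ∫₀ᴸ u² log(u² / ‖u‖²_{L²(S¹)}) dx`. -/
theorem higher_log_sobolev_circle_optimal (L : ℝ) (hL : 0 < L) (n : ℕ) (hn : 1 ≤ n) :
    ∀ ε > (0:ℝ), ∃ u : ℝ → ℝ,
      ContDiff ℝ (⊤ : ℕ∞) u ∧
      (∀ x : ℝ, u (x + L) = u x) ∧
      (∃ x : ℝ, deriv u x ≠ 0) ∧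
      0 < (∫ x in (0:ℝ)..L,
            u x ^ 2 * Real.log (u x ^ 2 / ((1 / L) * ∫ y in (0:ℝ)..L, u y ^ 2))) ∧
      (∫ x in (0:ℝ)..L, (iteratedDeriv n u x) ^ 2)
        < ((1 / 2) * (2 * Real.pi / L) ^ (2 * n) + ε) *
          ∫ x in (0:ℝ)..L,
            u x ^ 2 * Real.log (u x ^ 2 / ((1 / L) * ∫ y in (0:ℝ)..L, u y ^ 2)) := by
  intro ε hε
  obtain ⟨m, rfl⟩ : ∃ m, n = m + 1 := ⟨n - 1, (Nat.succ_pred_eq_of_pos hn).symm⟩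
  set ω : ℝ := 2*Real.pi/L with hωdef
  have hπ := Real.pi_pos
  have hω : 0 < ω := by positivity
  have hωL : ω * L = 2*Real.pi := by rw [hωdef]; field_simp
  set K : ℝ := (1/2) * ω^(2*(m+1)) + ε with hKdef
  have hK : 0 < K := by positivity
  set δ : ℝ := min (1/18) (ε/(18*K)) with hδdef
  have hδ0 : 0 < δ := by
    apply lt_min (by norm_num)
    positivity
  have hδ18 : δ ≤ 1/18 := min_le_left _ _
  have hδK : 18*K*δ ≤ ε := by
    have h1 : δ ≤ ε/(18*K) := min_le_right _ _
    have h2 : 18*K*δ ≤ 18*K*(ε/(18*K)) := by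
      apply mul_le_mul_of_nonneg_left h1 (by positivity)
    calc 18*K*δ ≤ 18*K*(ε/(18*K)) := h2
    _ = ε := by field_simp
  clear_value K
  clear_value δ
  set u : ℝ → ℝ := fun x => 1 + δ * Real.cos (ω*x) with hudef
  have hcont : Continuous u := by fun_prop
  -- basic pointwise bounds
  have hubound : ∀ x : ℝ, 1/2 ≤ u x := by
    intro x
    have := Real.neg_one_le_cos (ω*x)
    have : -δ ≤ δ * Real.cos (ω*x) := by nlinarith
    simp only [hudef]
    linarith
  -- integrals of u^2
  have hI2 : (∫ y in (0:ℝ)..L, u y ^ 2) = L + δ^2*(L/2) := by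
    have hcongr : Set.EqOn (fun y => u y ^ 2)
        (fun y => 1 + (2*δ) * Real.cos (ω*y) + δ^2 * Real.cos (ω*y)^2) (Set.uIcc 0 L) := by
      intro y _
      simp only [hudef]
      ring
    rw [intervalIntegral.integral_congr hcongr, integral_trig_poly_s3 L ω 1 (2*δ) (δ^2) hL hωdef]
    ring
  have hA : (1 / L) * ∫ y in (0:ℝ)..L, u y ^ 2 = 1 + δ^2/2 := by
    rw [hI2]
    field_simp
  -- iterated derivative formula
  have hD : ∀ k : ℕ, iteratedDeriv (k+1) u
      = fun x => δ * ω^(k+1) * Real.cos (ω*x + ((k:ℝ)+1)*(Real.pi/2)) := by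
    intro k
    induction k with
    | zero =>
      rw [iteratedDeriv_one]
      funext x
      have h1 : HasDerivAt u (δ * (-Real.sin (ω*x) * ω)) x := by
        have := ((((hasDerivAt_id x).const_mul ω).cos).const_mul δ).const_add 1
        simpa [hudef] using this
      rw [h1.deriv, show ((0:ℕ):ℝ) + 1 = 1 by norm_num, one_mul, pow_one,
        Real.cos_add_pi_div_two]
      ring
    | succ k ih =>
      rw [iteratedDeriv_succ, ih]
      funext x
      have h1 : HasDerivAt (fun y => δ * ω^(k+1) * Real.cos (ω*y + ((k:ℝ)+1)*(Real.pi/2)))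
          (δ * ω^(k+1) * (-Real.sin (ω*x + ((k:ℝ)+1)*(Real.pi/2)) * ω)) x := by
        have := ((((hasDerivAt_id x).const_mul ω).add_const
          (((k:ℝ)+1)*(Real.pi/2))).cos).const_mul (δ * ω^(k+1))
        simpa using this
      rw [h1.deriv]
      push_cast
      rw [show ω*x + ((k:ℝ)+1+1)*(Real.pi/2) = (ω*x + ((k:ℝ)+1)*(Real.pi/2)) + Real.pi/2 by ring,
        Real.cos_add_pi_div_two]
      ring
  -- the n-th derivative integral
  have hLHS : (∫ x in (0:ℝ)..L, (iteratedDeriv (m+1) u x) ^ 2)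
      = δ^2 * ω^(2*(m+1)) * (L/2) := by
    rw [hD m]
    have hcongr : Set.EqOn (fun x => (δ * ω^(m+1) * Real.cos (ω*x + ((m:ℝ)+1)*(Real.pi/2)))^2)
        (fun x => (δ^2 * ω^(2*(m+1))) * Real.cos (ω*x + ((m:ℝ)+1)*(Real.pi/2))^2) (Set.uIcc 0 L) := by
      intro x _
      have hpow : (ω^(m+1))^2 = ω^(2*(m+1)) := by
        rw [← pow_mul, Nat.mul_comm]
      simp only [mul_pow, hpow]
    rw [intervalIntegral.integral_congr hcongr, intervalIntegral.integral_const_mul,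
      integral_cos_sq_phase L ω _ hL hωdef]
  -- entropy lower bound
  set E : ℝ := ∫ x in (0:ℝ)..L, u x ^ 2 * Real.log (u x ^ 2 / (1 + δ^2/2)) with hEdef
  have hElb : L*(δ^2 - 8*δ^3 - δ^4/4) ≤ E := by
    have hflow : (∫ x in (0:ℝ)..L, ((-8*δ^3 - δ^2/2) + (2*δ - δ^3) * Real.cos (ω*x)
        + (3*δ^2 - δ^4/2) * Real.cos (ω*x)^2)) = (-8*δ^3 - δ^2/2)*L + (3*δ^2 - δ^4/2)*(L/2) :=
      integral_trig_poly_s3 L ω _ _ _ hL hωdef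
    have hmono : (∫ x in (0:ℝ)..L, ((-8*δ^3 - δ^2/2) + (2*δ - δ^3) * Real.cos (ω*x)
        + (3*δ^2 - δ^4/2) * Real.cos (ω*x)^2)) ≤ E := by
      apply intervalIntegral.integral_mono_on (le_of_lt hL)
      · apply Continuous.intervalIntegrable; fun_prop
      · apply Continuous.intervalIntegrable
        have h1 : Continuous (fun x => u x ^ 2 / (1 + δ^2/2)) := by fun_prop
        have h2 : Continuous (fun x => Real.log (u x ^ 2 / (1 + δ^2/2))) :=
          h1.log (fun x => ne_of_gt (div_pos
            (pow_pos (lt_of_lt_of_le one_half_pos (hubound x)) 2) (by positivity)))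
        exact (hcont.pow 2).mul h2
      · intro x _
        set c := Real.cos (ω*x) with hc
        set s := δ * c with hs
        have hc1 : -1 ≤ c := Real.neg_one_le_cos _
        have hc2 : c ≤ 1 := Real.cos_le_one _
        have hsl : -δ ≤ s := by nlinarith
        have hsu : s ≤ δ := by nlinarith
        have hu : u x = 1 + s := rfl
        have hup : (0:ℝ) < 1 + s := by
          have := hubound x
          rw [hu] at this
          linarith
        have hAp : (0:ℝ) < 1 + δ^2/2 := by positivity
        have hlogA1 : Real.log (1 + δ^2/2) ≤ δ^2/2 := by
          have := Real.log_le_sub_one_of_pos hAp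
          linarith
        have hlogA0 : 0 ≤ Real.log (1 + δ^2/2) := Real.log_nonneg (by nlinarith)
        have hq : s - s^2/2 + s^3/3 - s^4 ≤ Real.log (1+s) :=
          log_taylor_lb (by linarith)
        have hlogsplit : Real.log (u x ^ 2 / (1 + δ^2/2))
            = 2 * Real.log (1+s) - Real.log (1 + δ^2/2) := by
          rw [hu, Real.log_div (by positivity) (ne_of_gt hAp), Real.log_pow]
          push_cast
          ring
        rw [hu, hlogsplit]
        have hkey : 2*s + 3*s^2 - 8*δ^3 ≤ (1+s)^2 * (2*(s - s^2/2 + s^3/3 - s^4)) := by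
          have habs : |s| ≤ δ := abs_le.2 ⟨hsl, hsu⟩
          have hp : ∀ j : ℕ, |s|^j ≤ δ^j := fun j => pow_le_pow_left₀ (abs_nonneg s) habs j
          have h3l : -δ^3 ≤ s^3 := by
            have := hp 3; have := abs_pow s 3 ▸ neg_abs_le (s^3); linarith [(abs_pow s 3).symm ▸ hp 3, neg_abs_le (s^3)]
          have h4u : s^4 ≤ δ^4 := by
            have h := hp 4; rw [← abs_pow] at h; linarith [le_abs_self (s^4)]
          have h5l : -δ^5 ≤ s^5 := by
            have h := hp 5; rw [← abs_pow] at h; linarith [neg_abs_le (s^5)]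
          have h6u : s^6 ≤ δ^6 := by
            have h := hp 6; rw [← abs_pow] at h; linarith [le_abs_self (s^6)]
          have hd1 : δ ≤ 1 := by linarith
          have hd4 : δ^4 ≤ δ^3 := pow_le_pow_of_le_one (le_of_lt hδ0) hd1 (by norm_num)
          have hd5 : δ^5 ≤ δ^3 := pow_le_pow_of_le_one (le_of_lt hδ0) hd1 (by norm_num)
          have hd6 : δ^6 ≤ δ^3 := pow_le_pow_of_le_one (le_of_lt hδ0) hd1 (by norm_num)
          nlinarith
        have hmul : (1+s)^2 * (2*(s - s^2/2 + s^3/3 - s^4) - Real.log (1 + δ^2/2))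
            ≤ (1+s)^2 * (2 * Real.log (1+s) - Real.log (1 + δ^2/2)) := by
          apply mul_le_mul_of_nonneg_left _ (sq_nonneg _)
          linarith
        have hmul2 : (1+s)^2 * (2*(s - s^2/2 + s^3/3 - s^4) - (δ^2/2))
            ≥ (-8*δ^3 - δ^2/2) + (2*δ - δ^3) * c + (3*δ^2 - δ^4/2) * c^2 := by
          have hexp : (-8*δ^3 - δ^2/2) + (2*δ - δ^3) * c + (3*δ^2 - δ^4/2) * c^2
              = 2*s + 3*s^2 - 8*δ^3 - (δ^2/2)*(1+s)^2 := by
            rw [hs]; ring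
          rw [hexp]
          nlinarith [hkey]
        have hmul3 : (1+s)^2 * (2*(s - s^2/2 + s^3/3 - s^4) - Real.log (1 + δ^2/2))
            ≥ (1+s)^2 * (2*(s - s^2/2 + s^3/3 - s^4) - (δ^2/2)) := by
          apply mul_le_mul_of_nonneg_left _ (sq_nonneg _)
          linarith
        linarith
    rw [hflow] at hmono
    calc L*(δ^2 - 8*δ^3 - δ^4/4) = (-8*δ^3 - δ^2/2)*L + (3*δ^2 - δ^4/2)*(L/2) := by ring
    _ ≤ E := hmono
  have hE2 : L*δ^2*(1-9*δ) ≤ E := by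
    have hin : (0:ℝ) ≤ δ^3 - δ^4/4 := by
      nlinarith [mul_le_mul_of_nonneg_right hδ18 (le_of_lt (pow_pos hδ0 3))]
    have : L*δ^2*(1-9*δ) ≤ L*(δ^2 - 8*δ^3 - δ^4/4) := by nlinarith [mul_nonneg (le_of_lt hL) hin]
    linarith
  have hEpos : 0 < E := by
    have h1 : (0:ℝ) < L*δ^2*(1-9*δ) := by
      apply mul_pos (by positivity)
      linarith
    linarith
  refine ⟨u, ?_, ?_, ?_, ?_, ?_⟩
  · rw [hudef]
    exact contDiff_const.add (contDiff_const.mul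
      (Real.contDiff_cos.comp (contDiff_const.mul contDiff_id)))
  · intro x
    have : ω*(x+L) = ω*x + 2*Real.pi := by
      rw [mul_add, hωL]
    simp only [hudef, this, Real.cos_add_two_pi]
  · refine ⟨L/4, ?_⟩
    have hd := hD 0
    rw [iteratedDeriv_one] at hd
    simp only [hd]
    have harg : ω*(L/4) + (((0:ℕ):ℝ)+1)*(Real.pi/2) = Real.pi := by
      rw [hωdef]
      push_cast
      field_simp
      ring
    rw [harg, Real.cos_pi]
    have hne : δ * ω^1 * (-1) < 0 := by nlinarith [mul_pos hδ0 hω]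
    exact ne_of_lt hne
  · rw [hA, ← hEdef]
    exact hEpos
  · rw [hA, hLHS, ← hEdef]
    have hfinal : δ^2 * ω^(2*(m+1)) * (L/2) < K * (L*δ^2*(1-9*δ)) := by
      have h9 : 9*K*δ ≤ ε/2 := by linarith
      have h1 : ω^(2*(m+1))/2 < K*(1-9*δ) := by
        have hexpand : K*(1-9*δ) = K - 9*K*δ := by ring
        rw [hexpand]
        linarith [h9, hε]
      calc δ^2 * ω^(2*(m+1)) * (L/2) = (L*δ^2) * (ω^(2*(m+1))/2) := by ring
      _ < (L*δ^2) * (K*(1-9*δ)) := by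
          apply mul_lt_mul_of_pos_left h1 (by positivity)
      _ = K * (L*δ^2*(1-9*δ)) := by ring
    calc δ^2 * ω^(2*(m+1)) * (L/2) < K * (L*δ^2*(1-9*δ)) := hfinal
    _ ≤ K * E := by
        apply mul_le_mul_of_nonneg_left hE2 (le_of_lt hK)
end

section
/- Integration-by-parts identity on the circle: let L > 0 and let u : ℝ → ℝ be a smooth L-periodic function with u > 0. Then ∫₀ᴸ (u'(x))² u''(x) / u(x)² dx = (2/3) ∫₀ᴸ (u'(x))⁴ / u(x)³ dx. -/
/-- Integration-by-parts identity on the circle of length `L`: for a smooth positive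
`L`-periodic `u : ℝ → ℝ`, `∫₀ᴸ (u')² u'' / u² dx = (2/3) ∫₀ᴸ (u')⁴ / u³ dx`. -/
theorem ibp_identity_circle (L : ℝ) (hL : 0 < L) (u : ℝ → ℝ)
    (hsmooth : ContDiff ℝ (⊤ : ℕ∞) u)
    (hper : ∀ x : ℝ, u (x + L) = u x)
    (hpos : ∀ x : ℝ, 0 < u x) :
    ∫ x in (0:ℝ)..L, (deriv u x) ^ 2 * iteratedDeriv 2 u x / u x ^ 2
      = (2 / 3) * ∫ x in (0:ℝ)..L, (deriv u x) ^ 4 / u x ^ 3 := by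
  have hd1 : Differentiable ℝ u := hsmooth.differentiable (by simp)
  have hsm1 : ContDiff ℝ (⊤ : ℕ∞) (deriv u) := (contDiff_infty_iff_deriv.mp hsmooth).2
  have hd2 : Differentiable ℝ (deriv u) := hsm1.differentiable (by simp)
  have h2eq : iteratedDeriv 2 u = deriv (deriv u) := by
    rw [iteratedDeriv_succ, iteratedDeriv_one]
  have hc0 : Continuous u := hd1.continuous
  have hc1 : Continuous (deriv u) := hd2.continuous
  have hc2 : Continuous (iteratedDeriv 2 u) := by
    rw [h2eq]; exact (contDiff_infty_iff_deriv.mp hsm1).2.continuous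
  have hune : ∀ x, u x ≠ 0 := fun x => (hpos x).ne'
  set F : ℝ → ℝ := fun x => (deriv u x) ^ 3 / u x ^ 2 with hF
  have key : ∀ x, HasDerivAt F
      (3 * (deriv u x) ^ 2 * iteratedDeriv 2 u x / u x ^ 2
        - 2 * (deriv u x) ^ 4 / u x ^ 3) x := by
    intro x
    have hu : HasDerivAt u (deriv u x) x := (hd1 x).hasDerivAt
    have hu' : HasDerivAt (deriv u) (iteratedDeriv 2 u x) x := by
      rw [h2eq]; exact (hd2 x).hasDerivAt
    have h := ((hu'.fun_pow 3).fun_div (hu.fun_pow 2) (pow_ne_zero 2 (hune x)))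
    refine h.congr_deriv ?_
    have := hune x
    field_simp
    ring
  -- continuity of the derivative expression
  have hcontD : Continuous fun x => 3 * (deriv u x) ^ 2 * iteratedDeriv 2 u x / u x ^ 2
      - 2 * (deriv u x) ^ 4 / u x ^ 3 := by
    apply Continuous.sub
    · exact (((continuous_const.mul (hc1.pow 2)).mul hc2).div (hc0.pow 2)
        fun x => pow_ne_zero 2 (hune x))
    · exact ((continuous_const.mul (hc1.pow 4)).div (hc0.pow 3)
        fun x => pow_ne_zero 3 (hune x))
  have hint : ∫ x in (0:ℝ)..L,
      (3 * (deriv u x) ^ 2 * iteratedDeriv 2 u x / u x ^ 2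
        - 2 * (deriv u x) ^ 4 / u x ^ 3) = F L - F 0 := by
    exact intervalIntegral.integral_eq_sub_of_hasDerivAt (fun x _ => key x)
      (hcontD.intervalIntegrable 0 L)
  have hperiodic : F L = F 0 := by
    have hdper : deriv u L = deriv u 0 := by
      have h1 : HasDerivAt (fun x => u (x + L)) (deriv u (0 + L) * 1) 0 :=
        (hd1 (0 + L)).hasDerivAt.comp 0 ((hasDerivAt_id 0).add_const L)
      have h2 : (fun x => u (x + L)) = u := funext hper
      rw [h2] at h1
      have := h1.deriv
      simpa using this.symm
    have huper : u L = u 0 := by simpa using hper 0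
    simp [hF, hdper, huper]
  rw [hperiodic, sub_self] at hint
  have hA : IntervalIntegrable (fun x => (deriv u x) ^ 2 * iteratedDeriv 2 u x / u x ^ 2)
      MeasureTheory.volume 0 L :=
    (((hc1.pow 2).mul hc2).div (hc0.pow 2) fun x => pow_ne_zero 2 (hune x)).intervalIntegrable 0 L
  have hB : IntervalIntegrable (fun x => (deriv u x) ^ 4 / u x ^ 3)
      MeasureTheory.volume 0 L :=
    ((hc1.pow 4).div (hc0.pow 3) fun x => pow_ne_zero 3 (hune x)).intervalIntegrable 0 L
  have hsplit : ∫ x in (0:ℝ)..L,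
      (3 * (deriv u x) ^ 2 * iteratedDeriv 2 u x / u x ^ 2
        - 2 * (deriv u x) ^ 4 / u x ^ 3)
      = 3 * (∫ x in (0:ℝ)..L, (deriv u x) ^ 2 * iteratedDeriv 2 u x / u x ^ 2)
        - 2 * (∫ x in (0:ℝ)..L, (deriv u x) ^ 4 / u x ^ 3) := by
    rw [show (fun x => 3 * deriv u x ^ 2 * iteratedDeriv 2 u x / u x ^ 2
        - 2 * deriv u x ^ 4 / u x ^ 3)
      = fun x => 3 * (deriv u x ^ 2 * iteratedDeriv 2 u x / u x ^ 2)
        - 2 * (deriv u x ^ 4 / u x ^ 3) from funext fun x => by ring]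
    rw [intervalIntegral.integral_sub ((hA.const_mul 3)) ((hB.const_mul 2)),
      intervalIntegral.integral_const_mul, intervalIntegral.integral_const_mul]
  rw [hsplit] at hint
  linarith
end

section
/- Decomposition of the entropy production on the circle: let L > 0 and let u : ℝ → ℝ be a smooth L-periodic function with u > 0. Then ∫₀ᴸ u(x) · ( (log u)''(x) )² dx = 4 ∫₀ᴸ ( (√u)''(x) )² dx + (1/12) ∫₀ᴸ (u'(x))⁴ / u(x)³ dx, where (log u)'' and (√u)'' denote the second derivatives of log∘u and √∘u respectively. -/
open Real intervalIntegral

/-- Decomposition of the entropy production on the circle of length `L`: for a smooth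
positive `L`-periodic `u : ℝ → ℝ`,
`∫₀ᴸ u ((log u)'')² dx = 4 ∫₀ᴸ ((√u)'')² dx + (1/12) ∫₀ᴸ (u')⁴ / u³ dx`. -/
theorem entropy_production_decomposition_circle (L : ℝ) (hL : 0 < L) (u : ℝ → ℝ)
    (hsmooth : ContDiff ℝ (⊤ : ℕ∞) u)
    (hper : ∀ x : ℝ, u (x + L) = u x)
    (hpos : ∀ x : ℝ, 0 < u x) :
    ∫ x in (0:ℝ)..L, u x * (iteratedDeriv 2 (fun y => Real.log (u y)) x) ^ 2
      = 4 * (∫ x in (0:ℝ)..L, (iteratedDeriv 2 (fun y => Real.sqrt (u y)) x) ^ 2)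
        + (1 / 12) * ∫ x in (0:ℝ)..L, (deriv u x) ^ 4 / u x ^ 3 := by
  obtain ⟨hdu, hsd⟩ := contDiff_infty_iff_deriv.mp hsmooth
  obtain ⟨hdu', hsd2⟩ := contDiff_infty_iff_deriv.mp hsd
  set u1 := deriv u with hu1
  set u2 := deriv (deriv u) with hu2
  have hne : ∀ x : ℝ, u x ≠ 0 := fun x => (hpos x).ne'
  have hsne : ∀ x : ℝ, Real.sqrt (u x) ≠ 0 := fun x => (Real.sqrt_pos.mpr (hpos x)).ne'
  -- first derivatives
  have hdlog : deriv (fun y => Real.log (u y)) = fun y => u1 y / u y := by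
    funext x
    exact (((hdu x).hasDerivAt).log (hne x)).deriv
  have hdsqrt : deriv (fun y => Real.sqrt (u y)) = fun y => u1 y / (2 * Real.sqrt (u y)) := by
    funext x
    exact (((hdu x).hasDerivAt).sqrt (hne x)).deriv
  -- second derivatives
  have h2log : ∀ x : ℝ, iteratedDeriv 2 (fun y => Real.log (u y)) x
      = (u2 x * u x - u1 x * u1 x) / u x ^ 2 := by
    intro x
    rw [iteratedDeriv_succ, iteratedDeriv_one, hdlog]
    exact (((hdu' x).hasDerivAt).div ((hdu x).hasDerivAt) (hne x)).deriv
  have h2sqrt : ∀ x : ℝ, iteratedDeriv 2 (fun y => Real.sqrt (u y)) x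
      = (u2 x * (2 * Real.sqrt (u x)) - u1 x * (2 * (u1 x / (2 * Real.sqrt (u x)))))
          / (2 * Real.sqrt (u x)) ^ 2 := by
    intro x
    rw [iteratedDeriv_succ, iteratedDeriv_one, hdsqrt]
    have hg : HasDerivAt (fun y => 2 * Real.sqrt (u y)) (2 * (u1 x / (2 * Real.sqrt (u x)))) x :=
      (((hdu x).hasDerivAt).sqrt (hne x)).const_mul 2
    exact (((hdu' x).hasDerivAt).div hg (mul_ne_zero two_ne_zero (hsne x))).deriv
  -- the auxiliary function F = u'^3 / u^2 and its derivative G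
  set G : ℝ → ℝ := fun x =>
    (3 * u1 x ^ 2 * u2 x * u x ^ 2 - u1 x ^ 3 * (2 * u x ^ 1 * u1 x)) / (u x ^ 2) ^ 2 with hG
  have hF : ∀ x : ℝ, HasDerivAt (fun y => u1 y ^ 3 / u y ^ 2) (G x) x := by
    intro x
    have h1 : HasDerivAt (fun y => u1 y ^ 3) ((3 : ℝ) * u1 x ^ 2 * u2 x) x := by
      simpa using ((hdu' x).hasDerivAt).fun_pow 3
    have h2 : HasDerivAt (fun y => u y ^ 2) ((2 : ℝ) * u x ^ 1 * u1 x) x := by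
      simpa using ((hdu x).hasDerivAt).fun_pow 2
    exact h1.div h2 (pow_ne_zero 2 (hne x))
  -- continuity facts
  have hcu : Continuous u := hsmooth.continuous
  have hcu1 : Continuous u1 := hsd.continuous
  have hcu2 : Continuous u2 := hsd2.continuous
  have hcs : Continuous fun x => Real.sqrt (u x) := hcu.sqrt
  have hcA : Continuous fun x =>
      ((u2 x * (2 * Real.sqrt (u x)) - u1 x * (2 * (u1 x / (2 * Real.sqrt (u x)))))
        / (2 * Real.sqrt (u x)) ^ 2) ^ 2 := by
    apply Continuous.pow
    apply Continuous.div
    · exact (hcu2.mul (continuous_const.mul hcs)).sub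
        (hcu1.mul (continuous_const.mul (hcu1.div (continuous_const.mul hcs)
          (fun x => mul_ne_zero two_ne_zero (hsne x)))))
    · exact (continuous_const.mul hcs).pow 2
    · exact fun x => pow_ne_zero 2 (mul_ne_zero two_ne_zero (hsne x))
  have hcB : Continuous fun x => u1 x ^ 4 / u x ^ 3 :=
    (hcu1.pow 4).div (hcu.pow 3) (fun x => pow_ne_zero 3 (hne x))
  have hcG : Continuous G := by
    apply Continuous.div
    · exact (((continuous_const.mul (hcu1.pow 2)).mul hcu2).mul (hcu.pow 2)).sub
        ((hcu1.pow 3).mul ((continuous_const.mul (hcu.pow 1)).mul hcu1))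
    · exact (hcu.pow 2).pow 2
    · exact fun x => pow_ne_zero 2 (pow_ne_zero 2 (hne x))
  -- G integrates to zero over a period
  have hper1 : ∀ x : ℝ, u1 (x + L) = u1 x := by
    intro x
    have : (fun y => u (y + L)) = u := funext hper
    rw [hu1, ← deriv_comp_add_const, this]
  have hGint : ∫ x in (0:ℝ)..L, G x = 0 := by
    rw [intervalIntegral.integral_eq_sub_of_hasDerivAt (fun x _ => hF x)
      (hcG.intervalIntegrable 0 L)]
    have h1 : u1 L = u1 0 := by simpa using hper1 0
    have h2 : u L = u 0 := by simpa using hper 0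
    simp [h1, h2]
  -- pointwise identity
  have key : ∀ x : ℝ, u x * ((u2 x * u x - u1 x * u1 x) / u x ^ 2) ^ 2
      = 4 * (((u2 x * (2 * Real.sqrt (u x)) - u1 x * (2 * (u1 x / (2 * Real.sqrt (u x)))))
            / (2 * Real.sqrt (u x)) ^ 2) ^ 2)
        + (1 / 12) * (u1 x ^ 4 / u x ^ 3) - (1 / 3) * G x := by
    intro x
    have hs : Real.sqrt (u x) ≠ 0 := hsne x
    have hu : Real.sqrt (u x) ^ 2 = u x := Real.sq_sqrt (hpos x).le
    simp only [hG]
    rw [← hu]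
    set s := Real.sqrt (u x)
    rw [Real.sqrt_sq (show (0:ℝ) ≤ s from Real.sqrt_nonneg _)]
    field_simp
    ring
  -- assemble
  calc ∫ x in (0:ℝ)..L, u x * (iteratedDeriv 2 (fun y => Real.log (u y)) x) ^ 2
      = ∫ x in (0:ℝ)..L,
          (4 * (((u2 x * (2 * Real.sqrt (u x)) - u1 x * (2 * (u1 x / (2 * Real.sqrt (u x)))))
              / (2 * Real.sqrt (u x)) ^ 2) ^ 2)
            + (1 / 12) * (u1 x ^ 4 / u x ^ 3) - (1 / 3) * G x) := by
        apply intervalIntegral.integral_congr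
        intro x _
        dsimp only
        rw [h2log x]
        exact key x
    _ = 4 * (∫ x in (0:ℝ)..L,
          ((u2 x * (2 * Real.sqrt (u x)) - u1 x * (2 * (u1 x / (2 * Real.sqrt (u x)))))
              / (2 * Real.sqrt (u x)) ^ 2) ^ 2)
          + (1 / 12) * (∫ x in (0:ℝ)..L, u1 x ^ 4 / u x ^ 3)
          - (1 / 3) * ∫ x in (0:ℝ)..L, G x := by
        rw [intervalIntegral.integral_sub, intervalIntegral.integral_add,
          intervalIntegral.integral_const_mul, intervalIntegral.integral_const_mul,
          intervalIntegral.integral_const_mul]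
        · exact (continuous_const.mul hcA).intervalIntegrable 0 L
        · exact (continuous_const.mul hcB).intervalIntegrable 0 L
        · exact ((continuous_const.mul hcA).add
            (continuous_const.mul hcB)).intervalIntegrable 0 L
        · exact (continuous_const.mul hcG).intervalIntegrable 0 L
    _ = 4 * (∫ x in (0:ℝ)..L, (iteratedDeriv 2 (fun y => Real.sqrt (u y)) x) ^ 2)
        + (1 / 12) * ∫ x in (0:ℝ)..L, (deriv u x) ^ 4 / u x ^ 3 := by
        rw [hGint]
        simp only [mul_zero, sub_zero]
        congr 2
        apply intervalIntegral.integral_congr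
        intro x _
        dsimp only
        rw [h2sqrt x]
end

section
/- Alternative form of the entropy production on the circle: let L > 0 and let u : ℝ → ℝ be a smooth L-periodic function with u > 0. Then ∫₀ᴸ u(x) · ( (log u)''(x) )² dx = ∫₀ᴸ ( u''(x)² / u(x) − (1/3) · (u'(x))⁴ / u(x)³ ) dx. -/
private lemma entropy_aux1 (a b c : ℝ) (h : a ≠ 0) :
    3 * c * b ^ 2 / a ^ 2 - 2 * b ^ 4 / a ^ 3
      = ((3 : ℕ) * b ^ 2 * c * a ^ 2 - b ^ 3 * ((2 : ℕ) * a ^ 1 * b)) / (a ^ 2) ^ 2 := by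
  field_simp
  ring

private lemma entropy_aux2 (a b c : ℝ) (h : a ≠ 0) :
    a * ((c * a - b * b) / a ^ 2) ^ 2
      = (c ^ 2 / a - (1 / 3) * b ^ 4 / a ^ 3)
        - (2 / 3) * (3 * c * b ^ 2 / a ^ 2 - 2 * b ^ 4 / a ^ 3) := by
  field_simp
  ring

/-- Alternative form of the entropy production on the circle of length `L`: for a
smooth positive `L`-periodic `u : ℝ → ℝ`,
`∫₀ᴸ u ((log u)'')² dx = ∫₀ᴸ ( (u'')²/u − (1/3)(u')⁴/u³ ) dx`. -/
theorem entropy_production_alt_form_circle (L : ℝ) (hL : 0 < L) (u : ℝ → ℝ)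
    (hsmooth : ContDiff ℝ (⊤ : ℕ∞) u)
    (hper : ∀ x : ℝ, u (x + L) = u x)
    (hpos : ∀ x : ℝ, 0 < u x) :
    ∫ x in (0:ℝ)..L, u x * (iteratedDeriv 2 (fun y => Real.log (u y)) x) ^ 2
      = ∫ x in (0:ℝ)..L,
          ((iteratedDeriv 2 u x) ^ 2 / u x - (1 / 3) * (deriv u x) ^ 4 / u x ^ 3) := by
  have hu : Differentiable ℝ u := hsmooth.differentiable (by simp)
  have hcd1 : ContDiff ℝ (⊤ : ℕ∞) (deriv u) := (contDiff_infty_iff_deriv.mp hsmooth).2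
  have hv : Differentiable ℝ (deriv u) := hcd1.differentiable (by simp)
  have hcd2 : ContDiff ℝ (⊤ : ℕ∞) (deriv (deriv u)) := (contDiff_infty_iff_deriv.mp hcd1).2
  set v : ℝ → ℝ := deriv u with hvdef
  set w : ℝ → ℝ := deriv v with hwdef
  have hcu : Continuous u := hsmooth.continuous
  have hcv : Continuous v := hcd1.continuous
  have hcw : Continuous w := hcd2.continuous
  have hune : ∀ x, u x ≠ 0 := fun x => (hpos x).ne'
  -- first derivative of log ∘ u
  have hd1 : ∀ x, HasDerivAt (fun y => Real.log (u y)) (v x / u x) x := by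
    intro x
    have := (Real.hasDerivAt_log (hune x)).comp x (hu x).hasDerivAt
    exact this.congr_deriv (by simp [div_eq_inv_mul, hvdef])
  have hderiv1 : deriv (fun y => Real.log (u y)) = fun x => v x / u x :=
    funext fun x => (hd1 x).deriv
  -- second derivative of log ∘ u
  have hlog2 : ∀ x, iteratedDeriv 2 (fun y => Real.log (u y)) x
      = (w x * u x - v x * v x) / (u x) ^ 2 := by
    intro x
    have hdiv : HasDerivAt (fun y => v y / u y) ((w x * u x - v x * v x) / (u x) ^ 2) x :=
      (hv x).hasDerivAt.div (hu x).hasDerivAt (hune x)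
    rw [show (2 : ℕ) = 1 + 1 from rfl, iteratedDeriv_succ, iteratedDeriv_one, hderiv1]
    exact hdiv.deriv
  have h2u : iteratedDeriv 2 u = w := by
    rw [show (2 : ℕ) = 1 + 1 from rfl, iteratedDeriv_succ, iteratedDeriv_one]
  -- the auxiliary function g = v^3 / u^2 and its derivative G
  set G : ℝ → ℝ := fun x => 3 * w x * (v x) ^ 2 / (u x) ^ 2 - 2 * (v x) ^ 4 / (u x) ^ 3
    with hGdef
  set g : ℝ → ℝ := fun x => (v x) ^ 3 / (u x) ^ 2 with hgdef
  have hg : ∀ x, HasDerivAt g (G x) x := by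
    intro x
    have hnum : HasDerivAt (fun y => (v y) ^ 3) ((3 : ℕ) * (v x) ^ 2 * w x) x := by
      exact ((hv x).hasDerivAt.pow 3).congr_deriv (by simp [hwdef])
    have hden : HasDerivAt (fun y => (u y) ^ 2) ((2 : ℕ) * (u x) ^ 1 * v x) x := by
      exact ((hu x).hasDerivAt.pow 2).congr_deriv (by simp [hvdef])
    have := hnum.div hden (pow_ne_zero 2 (hune x))
    exact this.congr_deriv (entropy_aux1 (u x) (v x) (w x) (hune x)).symm
  have hGc : Continuous G := by
    apply Continuous.sub
    · exact (((continuous_const.mul hcw).mul (hcv.pow 2)).div (hcu.pow 2)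
        fun x => pow_ne_zero 2 (hune x))
    · exact ((continuous_const.mul (hcv.pow 4)).div (hcu.pow 3)
        fun x => pow_ne_zero 3 (hune x))
  -- periodicity of u and v
  have huL : u L = u 0 := by simpa using hper 0
  have hvL : v L = v 0 := by
    have : (fun y => u (y + L)) = u := funext hper
    have h := deriv_comp_add_const u L 0
    rw [this] at h
    simpa using h.symm
  have hkey : ∫ x in (0:ℝ)..L, G x = 0 := by
    rw [intervalIntegral.integral_eq_sub_of_hasDerivAt (fun x _ => hg x)
      (hGc.intervalIntegrable 0 L)]
    simp [hgdef, huL, hvL]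
  -- pointwise identity
  have hpt : ∀ x, u x * (iteratedDeriv 2 (fun y => Real.log (u y)) x) ^ 2
      = ((iteratedDeriv 2 u x) ^ 2 / u x - (1 / 3) * (deriv u x) ^ 4 / u x ^ 3)
        - (2 / 3) * G x := by
    intro x
    rw [hlog2 x, h2u, hGdef]
    exact entropy_aux2 (u x) (v x) (w x) (hune x)
  have hFc : Continuous fun x =>
      (iteratedDeriv 2 u x) ^ 2 / u x - (1 / 3) * (deriv u x) ^ 4 / u x ^ 3 := by
    rw [h2u]
    apply Continuous.sub
    · exact (hcw.pow 2).div hcu hune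
    · exact ((continuous_const.mul (hcv.pow 4)).div (hcu.pow 3)
        fun x => pow_ne_zero 3 (hune x))
  calc ∫ x in (0:ℝ)..L, u x * (iteratedDeriv 2 (fun y => Real.log (u y)) x) ^ 2
      = ∫ x in (0:ℝ)..L,
          (((iteratedDeriv 2 u x) ^ 2 / u x - (1 / 3) * (deriv u x) ^ 4 / u x ^ 3)
            - (2 / 3) * G x) := by
        exact intervalIntegral.integral_congr fun x _ => hpt x
    _ = (∫ x in (0:ℝ)..L,
          ((iteratedDeriv 2 u x) ^ 2 / u x - (1 / 3) * (deriv u x) ^ 4 / u x ^ 3))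
        - ∫ x in (0:ℝ)..L, (2 / 3) * G x := by
        exact intervalIntegral.integral_sub (hFc.intervalIntegrable 0 L)
          ((continuous_const.mul hGc).intervalIntegrable 0 L)
    _ = ∫ x in (0:ℝ)..L,
          ((iteratedDeriv 2 u x) ^ 2 / u x - (1 / 3) * (deriv u x) ^ 4 / u x ^ 3) := by
        rw [intervalIntegral.integral_const_mul, hkey, mul_zero, sub_zero]
end

section
/- Entropy dissipation for the fourth-order equation: let L > 0 and let u : ℝ × [0, ∞) → ℝ be a smooth function, L-periodic in x, with u > 0, solving u_t + ( u (log u)_{xx} )_{xx} = 0. Then for every t ≥ 0, d/dt ∫₀ᴸ u(x,t)(log u(x,t) − 1) dx = − ∫₀ᴸ u(x,t) · ( (log u)_{xx}(x,t) )² dx; in particular t ↦ ∫₀ᴸ u(x,t)(log u(x,t) − 1) dx is non-increasing. -/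
open Real MeasureTheory Set intervalIntegral

private lemma periodic_deriv_aux {f : ℝ → ℝ} {c : ℝ} (h : Function.Periodic f c) :
    Function.Periodic (deriv f) c := by
  intro x
  have hfe : (fun y : ℝ => f (y + c)) = f := funext fun y => h y
  calc deriv f (x + c) = deriv (fun y => f (y + c)) x := (deriv_comp_add_const f c x).symm
    _ = deriv f x := by rw [hfe]

private lemma itd2 (h : ℝ → ℝ) : iteratedDeriv 2 h = deriv (deriv h) := by
  rw [iteratedDeriv_succ, iteratedDeriv_one]

private lemma deriv_smooth {f : ℝ → ℝ} (hf : ContDiff ℝ (⊤ : ℕ∞) f) :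
    ContDiff ℝ (⊤ : ℕ∞) (deriv f) := (contDiff_infty_iff_deriv.mp hf).2

/-- Integration by parts twice for smooth periodic functions. -/
private lemma per_ibp {L : ℝ} (hL : 0 < L) {f g : ℝ → ℝ}
    (hf : ContDiff ℝ (⊤ : ℕ∞) f) (hg : ContDiff ℝ (⊤ : ℕ∞) g)
    (hfp : Function.Periodic f L) (hgp : Function.Periodic g L) :
    ∫ x in (0:ℝ)..L, iteratedDeriv 2 f x * g x
      = ∫ x in (0:ℝ)..L, f x * iteratedDeriv 2 g x := by
  have hf1 := deriv_smooth hf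
  have hg1 := deriv_smooth hg
  have hf2 := deriv_smooth hf1
  have hg2 := deriv_smooth hg1
  have hdf : Differentiable ℝ f := hf.differentiable (by simp)
  have hdg : Differentiable ℝ g := hg.differentiable (by simp)
  have hdf1 : Differentiable ℝ (deriv f) := hf1.differentiable (by simp)
  have hdg1 : Differentiable ℝ (deriv g) := hg1.differentiable (by simp)
  -- the function H = f' g - f g'
  set H : ℝ → ℝ := fun x => deriv f x * g x - f x * deriv g x with hH
  have hHd : ∀ x, HasDerivAt H
      (deriv (deriv f) x * g x - f x * deriv (deriv g) x) x := by
    intro x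
    have h1 : HasDerivAt (fun y => deriv f y * g y)
        (deriv (deriv f) x * g x + deriv f x * deriv g x) x :=
      ((hdf1 x).hasDerivAt).mul ((hdg x).hasDerivAt)
    have h2 : HasDerivAt (fun y => f y * deriv g y)
        (deriv f x * deriv g x + f x * deriv (deriv g) x) x :=
      ((hdf x).hasDerivAt).mul ((hdg1 x).hasDerivAt)
    have := h1.sub h2
    refine this.congr_deriv ?_
    ring
  have hint : IntervalIntegrable
      (fun x => deriv (deriv f) x * g x - f x * deriv (deriv g) x) volume 0 L := by
    apply Continuous.intervalIntegrable
    exact ((hf2.continuous.mul hg.continuous).sub (hf.continuous.mul hg2.continuous))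
  have heval : (∫ x in (0:ℝ)..L,
      (deriv (deriv f) x * g x - f x * deriv (deriv g) x)) = H L - H 0 :=
    intervalIntegral.integral_eq_sub_of_hasDerivAt (fun x _ => hHd x) hint
  have hper : H L = H 0 := by
    have h0 : H (0 + L) = H 0 := by
      simp only [hH]
      rw [hfp 0, hgp 0, periodic_deriv_aux hfp 0, periodic_deriv_aux hgp 0]
    simpa using h0
  have hzero : (∫ x in (0:ℝ)..L,
      (deriv (deriv f) x * g x - f x * deriv (deriv g) x)) = 0 := by
    rw [heval, hper, sub_self]
  have hi1 : IntervalIntegrable (fun x => deriv (deriv f) x * g x) volume 0 L :=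
    (hf2.continuous.mul hg.continuous).intervalIntegrable _ _
  have hi2 : IntervalIntegrable (fun x => f x * deriv (deriv g) x) volume 0 L :=
    (hf.continuous.mul hg2.continuous).intervalIntegrable _ _
  rw [intervalIntegral.integral_sub hi1 hi2] at hzero
  rw [itd2, itd2]
  linarith [hzero]

/-- Entropy dissipation for the Derrida–Lebowitz–Speer–Spohn equation
`u_t + (u (log u)_xx)_xx = 0` on the circle of length `L`: for a smooth positive
solution `u` (here `u x t` with `x` the spatial and `t` the time variable,
`L`-periodic in `x`), for all `t ≥ 0`
`d/dt ∫₀ᴸ u (log u − 1) dx = − ∫₀ᴸ u ((log u)_xx)² dx`,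
and in particular `t ↦ ∫₀ᴸ u (log u − 1) dx` is non-increasing on `[0, ∞)`. -/
theorem entropy_dissipation_dlss (L : ℝ) (hL : 0 < L) (u : ℝ → ℝ → ℝ)
    (hsmooth : ContDiff ℝ (⊤ : ℕ∞) (fun q : ℝ × ℝ => u q.1 q.2))
    (hper : ∀ x t : ℝ, 0 ≤ t → u (x + L) t = u x t)
    (hpos : ∀ x t : ℝ, 0 ≤ t → 0 < u x t)
    (heq : ∀ x t : ℝ, 0 ≤ t →
      deriv (fun s => u x s) t
        + iteratedDeriv 2
            (fun y => u y t * iteratedDeriv 2 (fun z => Real.log (u z t)) y) x = 0) :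
    (∀ t : ℝ, 0 ≤ t →
      deriv (fun s => ∫ x in (0:ℝ)..L, u x s * (Real.log (u x s) - 1)) t
        = - ∫ x in (0:ℝ)..L,
              u x t * (iteratedDeriv 2 (fun z => Real.log (u z t)) x) ^ 2) ∧
    AntitoneOn (fun t => ∫ x in (0:ℝ)..L, u x t * (Real.log (u x t) - 1))
      (Set.Ici 0) := by
  set U : ℝ × ℝ → ℝ := fun q => u q.1 q.2 with hUdef
  have hUc : Continuous U := hsmooth.continuous
  set ut : ℝ → ℝ → ℝ := fun x t => fderiv ℝ U (x, t) (0, 1) with hutdef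
  have hut_cont : Continuous (fun q : ℝ × ℝ => ut q.1 q.2) := by
    exact (hsmooth.continuous_fderiv (by simp)).clm_apply continuous_const
  have hfd : ∀ x t : ℝ, HasDerivAt (fun s => u x s) (ut x t) t := by
    intro x t
    have h1 : HasFDerivAt U (fderiv ℝ U (x, t)) (x, t) :=
      ((hsmooth.differentiable (by simp)) (x, t)).hasFDerivAt
    have h2 : HasDerivAt (fun s : ℝ => ((x, s) : ℝ × ℝ)) ((0 : ℝ), (1 : ℝ)) t :=
      (hasDerivAt_const t x).prodMk (hasDerivAt_id t)
    exact h1.comp_hasDerivAt t h2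
  -- spatial smoothness at fixed time
  have hx_smooth : ∀ t : ℝ, ContDiff ℝ (⊤ : ℕ∞) (fun x => u x t) := by
    intro t
    exact hsmooth.comp (contDiff_id.prodMk contDiff_const)
  -- Step A: the derivative of the entropy is ∫ u_t log u
  have key : ∀ t₀ : ℝ, 0 ≤ t₀ →
      HasDerivAt (fun s => ∫ x in (0:ℝ)..L, u x s * (Real.log (u x s) - 1))
        (∫ x in (0:ℝ)..L, ut x t₀ * Real.log (u x t₀)) t₀ := by
    intro t₀ ht₀
    -- positivity in a neighborhood of [0,L] × {t₀}
    have hopen : IsOpen {q : ℝ × ℝ | 0 < U q} := isOpen_lt continuous_const hUc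
    have hK : IsCompact ((Icc (0:ℝ) L) ×ˢ ({t₀} : Set ℝ)) :=
      isCompact_Icc.prod isCompact_singleton
    have hKsub : ((Icc (0:ℝ) L) ×ˢ ({t₀} : Set ℝ)) ⊆ {q : ℝ × ℝ | 0 < U q} := by
      rintro ⟨x, t⟩ ⟨hx, ht⟩
      simp only [mem_singleton_iff] at ht
      subst ht
      exact hpos _ _ ht₀
    obtain ⟨δ, hδ, hth⟩ := hK.exists_thickening_subset_open hopen hKsub
    have hupos : ∀ x ∈ Icc (0:ℝ) L, ∀ t ∈ Metric.ball t₀ δ, 0 < u x t := by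
      intro x hx t ht
      have : ((x, t) : ℝ × ℝ) ∈ Metric.thickening δ ((Icc (0:ℝ) L) ×ˢ ({t₀} : Set ℝ)) := by
        rw [Metric.mem_thickening_iff]
        refine ⟨(x, t₀), ⟨hx, rfl⟩, ?_⟩
        rw [Prod.dist_eq]
        simp only [dist_self]
        simpa [Real.dist_eq] using ht
      exact hth this
    set ε : ℝ := δ / 2 with hεdef
    have hε : 0 < ε := by positivity
    -- compact set and bound
    have hQ : IsCompact ((Icc (0:ℝ) L) ×ˢ (Icc (t₀ - ε) (t₀ + ε))) :=
      isCompact_Icc.prod isCompact_Icc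
    have hQpos : ∀ q ∈ (Icc (0:ℝ) L) ×ˢ (Icc (t₀ - ε) (t₀ + ε)), 0 < U q := by
      rintro ⟨x, t⟩ ⟨hx, ht⟩
      apply hupos x hx t
      rw [Metric.mem_ball, Real.dist_eq, abs_sub_lt_iff]
      constructor <;> [linarith [ht.2]; linarith [ht.1]]
    have hGcont : ContinuousOn (fun q : ℝ × ℝ => ut q.1 q.2 * Real.log (U q))
        ((Icc (0:ℝ) L) ×ˢ (Icc (t₀ - ε) (t₀ + ε))) := by
      apply ContinuousOn.mul hut_cont.continuousOn
      exact hUc.continuousOn.log (fun q hq => (hQpos q hq).ne')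
    obtain ⟨C, hC⟩ := hQ.exists_bound_of_continuousOn hGcont
    -- apply the dominated-derivative theorem
    have main := intervalIntegral.hasDerivAt_integral_of_dominated_loc_of_deriv_le
      (F := fun s x => u x s * (Real.log (u x s) - 1))
      (F' := fun s x => ut x s * Real.log (u x s))
      (bound := fun _ => C) (μ := volume) (a := 0) (b := L) (x₀ := t₀) (s := Metric.ball t₀ ε) (Metric.ball_mem_nhds t₀ hε)
      ?_ ?_ ?_ ?_ ?_ ?_
    · exact main.2
    · -- a.e. strong measurability of F s
      apply Filter.Eventually.of_forall
      intro s
      have hc : Continuous fun x => u x s := hUc.comp (continuous_id.prodMk continuous_const)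
      exact ((hc.measurable.mul
        ((Real.measurable_log.comp hc.measurable).sub measurable_const))).aestronglyMeasurable
    · -- integrability of F t₀
      apply Continuous.intervalIntegrable
      have hc : Continuous fun x => u x t₀ := hUc.comp (continuous_id.prodMk continuous_const)
      exact hc.mul ((hc.log (fun x => (hpos x t₀ ht₀).ne')).sub continuous_const)
    · -- measurability of F' t₀
      have hc : Continuous fun x => u x t₀ := hUc.comp (continuous_id.prodMk continuous_const)
      have hc2 : Continuous fun x => ut x t₀ :=
        hut_cont.comp (continuous_id.prodMk continuous_const)
      exact (hc2.measurable.mul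
        (Real.measurable_log.comp hc.measurable)).aestronglyMeasurable
    · -- bound
      apply Filter.Eventually.of_forall
      intro x hx t ht
      have hx' : x ∈ Icc (0:ℝ) L := by
        rw [uIoc_of_le hL.le] at hx; exact ⟨hx.1.le, hx.2⟩
      have ht' : t ∈ Icc (t₀ - ε) (t₀ + ε) := by
        rw [Metric.mem_ball, Real.dist_eq, abs_sub_lt_iff] at ht
        constructor <;> linarith [ht.1, ht.2]
      exact hC (x, t) ⟨hx', ht'⟩
    · exact intervalIntegrable_const
    · -- differentiability in t
      apply Filter.Eventually.of_forall
      intro x hx t ht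
      have hx' : x ∈ Icc (0:ℝ) L := by
        rw [uIoc_of_le hL.le] at hx; exact ⟨hx.1.le, hx.2⟩
      have htδ : t ∈ Metric.ball t₀ δ := by
        rw [Metric.mem_ball] at ht ⊢
        calc dist t t₀ < ε := ht
          _ < δ := by rw [hεdef]; linarith
      have hp : 0 < u x t := hupos x hx' t htδ
      have h1 : HasDerivAt (fun s => u x s) (ut x t) t := hfd x t
      have hlog : HasDerivAt (fun s => Real.log (u x s)) (ut x t / u x t) t :=
        h1.log hp.ne'
      have := h1.mul (hlog.sub_const 1)
      refine this.congr_deriv ?_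
      field_simp
      ring
  -- Step B: the identity for the derivative value
  have keyB : ∀ t : ℝ, 0 ≤ t →
      (∫ x in (0:ℝ)..L, ut x t * Real.log (u x t))
        = - ∫ x in (0:ℝ)..L,
            u x t * (iteratedDeriv 2 (fun z => Real.log (u z t)) x) ^ 2 := by
    intro t ht
    set f : ℝ → ℝ := fun x => u x t with hfdef
    set ℓ : ℝ → ℝ := fun x => Real.log (f x) with hℓdef
    set w : ℝ → ℝ := iteratedDeriv 2 ℓ with hwdef
    set p : ℝ → ℝ := fun x => f x * w x with hpdef
    have hf_s : ContDiff ℝ (⊤ : ℕ∞) f := hx_smooth t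
    have hfpos : ∀ x, 0 < f x := fun x => hpos x t ht
    have hℓ_s : ContDiff ℝ (⊤ : ℕ∞) ℓ := hf_s.log (fun x => (hfpos x).ne')
    have hw_s : ContDiff ℝ (⊤ : ℕ∞) w := by
      rw [hwdef, itd2]
      exact deriv_smooth (deriv_smooth hℓ_s)
    have hp_s : ContDiff ℝ (⊤ : ℕ∞) p := hf_s.mul hw_s
    have hfper : Function.Periodic f L := fun x => hper x t ht
    have hℓper : Function.Periodic ℓ L := fun x => by simp [hℓdef, hfper x]
    have hwper : Function.Periodic w L := by
      rw [hwdef, itd2]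
      exact periodic_deriv_aux (periodic_deriv_aux hℓper)
    have hpper : Function.Periodic p L := fun x => by simp [hpdef, hfper x, hwper x]
    have hut_eq : ∀ x : ℝ, ut x t = - iteratedDeriv 2 p x := by
      intro x
      have h1 : deriv (fun s => u x s) t = ut x t := (hfd x t).deriv
      have h2 := heq x t ht
      rw [h1] at h2
      linarith
    have hstep1 : (∫ x in (0:ℝ)..L, ut x t * Real.log (u x t))
        = - ∫ x in (0:ℝ)..L, iteratedDeriv 2 p x * ℓ x := by
      rw [← intervalIntegral.integral_neg]
      apply intervalIntegral.integral_congr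
      intro x _
      show ut x t * ℓ x = -(iteratedDeriv 2 p x * ℓ x)
      rw [hut_eq x]
      ring
    have hstep2 : (∫ x in (0:ℝ)..L, iteratedDeriv 2 p x * ℓ x)
        = ∫ x in (0:ℝ)..L, p x * iteratedDeriv 2 ℓ x :=
      per_ibp hL hp_s hℓ_s hpper hℓper
    rw [hstep1, hstep2]
    congr 1
    apply intervalIntegral.integral_congr
    intro x _
    show p x * iteratedDeriv 2 ℓ x = u x t * (iteratedDeriv 2 (fun z => Real.log (u z t)) x) ^ 2
    have : iteratedDeriv 2 (fun z => Real.log (u z t)) x = w x := rfl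
    rw [this]
    simp only [hpdef]
    ring
  have hderiv : ∀ t : ℝ, 0 ≤ t →
      deriv (fun s => ∫ x in (0:ℝ)..L, u x s * (Real.log (u x s) - 1)) t
        = - ∫ x in (0:ℝ)..L,
            u x t * (iteratedDeriv 2 (fun z => Real.log (u z t)) x) ^ 2 := by
    intro t ht
    rw [(key t ht).deriv]
    exact keyB t ht
  refine ⟨hderiv, ?_⟩
  apply antitoneOn_of_deriv_nonpos (convex_Ici 0)
  · intro t ht
    exact (key t ht).continuousAt.continuousWithinAt
  · intro t ht
    rw [interior_Ici] at ht
    exact (key t (le_of_lt ht)).differentiableAt.differentiableWithinAt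
  · intro t ht
    rw [interior_Ici] at ht
    rw [hderiv t (le_of_lt ht)]
    apply neg_nonpos.mpr
    apply intervalIntegral.integral_nonneg hL.le
    intro x _
    exact mul_nonneg (hpos x t (le_of_lt ht)).le (sq_nonneg _)
end

section
/- Heat-flow monotonicity behind the logarithmic Sobolev inequality: let L > 0 and let v : ℝ × [0, ∞) → ℝ be a smooth function, L-periodic in x, with v > 0, solving the heat equation v_t = v_{xx}, and normalized so that (1/L)∫₀ᴸ v(x, 0) dx = 1. Then the function f(t) = ∫₀ᴸ ( (√v)_x(x,t) )² dx − (2π²/L²) ∫₀ᴸ v(x,t) · log v(x,t) dx is non-increasing on [0, ∞); indeed f'(t) ≤ −(2/3) ∫₀ᴸ ( (√v)_x(x,t) )⁴ / v(x,t) dx ≤ 0 for all t ≥ 0. -/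
set_option maxHeartbeats 1000000

open Real MeasureTheory Set Filter Topology intervalIntegral ContinuousMap

section Helpers

lemma hasDerivAt_slice_fst {F : ℝ × ℝ → ℝ} (hF : ContDiff ℝ (⊤:ℕ∞) F) (x s : ℝ) :
    HasDerivAt (fun y => F (y, s)) (fderiv ℝ F (x, s) (1, 0)) x := by
  have h1 : HasDerivAt (fun y : ℝ => ((y, s) : ℝ × ℝ)) ((1:ℝ), (0:ℝ)) x :=
    (hasDerivAt_id x).prodMk (hasDerivAt_const x s)
  exact ((hF.differentiable (by simp) (x, s)).hasFDerivAt.comp_hasDerivAt x h1)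

lemma hasDerivAt_slice_snd {F : ℝ × ℝ → ℝ} (hF : ContDiff ℝ (⊤:ℕ∞) F) (x s : ℝ) :
    HasDerivAt (fun r => F (x, r)) (fderiv ℝ F (x, s) (0, 1)) s := by
  have h1 : HasDerivAt (fun r : ℝ => ((x, r) : ℝ × ℝ)) ((0:ℝ), (1:ℝ)) s :=
    (hasDerivAt_const s x).prodMk (hasDerivAt_id s)
  exact ((hF.differentiable (by simp) (x, s)).hasFDerivAt.comp_hasDerivAt s h1)

lemma contDiff_pderiv {F : ℝ × ℝ → ℝ} (hF : ContDiff ℝ (⊤:ℕ∞) F) (e : ℝ × ℝ) :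
    ContDiff ℝ (⊤:ℕ∞) (fun q => fderiv ℝ F q e) :=
  (hF.fderiv_right (mod_cast le_top)).clm_apply contDiff_const

lemma clairaut {F : ℝ × ℝ → ℝ} (hF : ContDiff ℝ (⊤:ℕ∞) F) (q : ℝ × ℝ) (e₁ e₂ : ℝ × ℝ) :
    fderiv ℝ (fun p => fderiv ℝ F p e₁) q e₂ = fderiv ℝ (fun p => fderiv ℝ F p e₂) q e₁ := by
  have hd : ∀ y, HasFDerivAt F (fderiv ℝ F y) y := fun y =>
    (hF.differentiable (by simp) y).hasFDerivAt
  have hf' : ContDiff ℝ (⊤:ℕ∞) (fderiv ℝ F) := hF.fderiv_right (mod_cast le_top)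
  have hf'' : HasFDerivAt (fderiv ℝ F) (fderiv ℝ (fderiv ℝ F) q) q :=
    (hf'.differentiable (by simp) q).hasFDerivAt
  have key : ∀ e d : ℝ × ℝ, fderiv ℝ (fun p => fderiv ℝ F p e) q d
      = fderiv ℝ (fderiv ℝ F) q d e := by
    intro e d
    have h : HasFDerivAt (fun p => fderiv ℝ F p e)
        ((ContinuousLinearMap.apply ℝ ℝ e).comp (fderiv ℝ (fderiv ℝ F) q)) q :=
      (ContinuousLinearMap.apply ℝ ℝ e).hasFDerivAt.comp q hf''
    rw [h.fderiv]; rfl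
  rw [key e₁ e₂, key e₂ e₁]
  exact second_derivative_symmetric hd hf'' e₂ e₁


variable {L : ℝ}

/-- Parseval for continuous `L`-periodic functions, in interval-integral form. -/
lemma parseval_periodic (hL : 0 < L) (h : ℝ → ℂ) (hc : Continuous h)
    (hp : ∀ x, h (x + L) = h x) :
    Summable (fun n : ℤ => ‖fourierCoeffOn hL h n‖ ^ 2) ∧
      L * ∑' n : ℤ, ‖fourierCoeffOn hL h n‖ ^ 2 = ∫ x in (0:ℝ)..L, ‖h x‖ ^ 2 := by
  haveI : Fact (0 < L) := ⟨hL⟩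
  have hh : h 0 = h L := by rw [← hp 0, zero_add]
  have Hcont : Continuous (AddCircle.liftIco L 0 h) :=
    AddCircle.liftIco_zero_continuous hh hc.continuousOn
  set H : C(AddCircle L, ℂ) := ⟨AddCircle.liftIco L 0 h, Hcont⟩ with hH
  have hHcoe : ∀ x : ℝ, x ∈ Set.Icc 0 L → H (x : AddCircle L) = h x := by
    intro x hx
    rcases eq_or_lt_of_le hx.2 with hxe | hxL
    · have hcoe : ((x : ℝ) : AddCircle L) = ((0 : ℝ) : AddCircle L) := by
        rw [hxe]
        have := AddCircle.coe_add_period L 0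
        rw [zero_add] at this
        exact this
      rw [hH]
      show AddCircle.liftIco L 0 h _ = h x
      rw [hcoe, AddCircle.liftIco_coe_apply (by simp [hL] : (0:ℝ) ∈ Set.Ico 0 (0 + L))]
      rw [hxe, ← hh]
    · rw [hH]
      show AddCircle.liftIco L 0 h _ = h x
      exact AddCircle.liftIco_coe_apply (by simp [hx.1, hxL])
  have hcoeff : ∀ n : ℤ, fourierCoeff (⇑H) n = fourierCoeffOn hL h n := by
    intro n
    have := fourierCoeff_liftIco_eq (T := L) (a := 0) h n
    simp only [zero_add] at this
    exact this
  set F := ContinuousMap.toLp (E := ℂ) 2 AddCircle.haarAddCircle ℂ H with hF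
  have hreprF : ∀ n : ℤ, fourierCoeff (⇑(F : AddCircle L →ₘ[AddCircle.haarAddCircle] ℂ)) n = fourierCoeffOn hL h n := by
    intro n; rw [fourierCoeff_toLp]; exact hcoeff n
  constructor
  · have hmem := lp.memℓp (fourierBasis.repr F)
    have hsum := hmem.summable (p := 2) (by norm_num)
    have : (fun n : ℤ => ‖fourierBasis.repr F n‖ ^ ((2:ENNReal).toReal))
        = fun n : ℤ => ‖fourierCoeffOn hL h n‖ ^ 2 := by
      funext n
      rw [fourierBasis_repr, hreprF n]
      norm_num [Real.rpow_natCast]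
    rwa [this] at hsum
  · have hpars := tsum_sq_fourierCoeff F
    have h1 : ∑' n : ℤ, ‖fourierCoeffOn hL h n‖ ^ 2
        = ∫ t : AddCircle L, ‖F t‖ ^ 2 ∂AddCircle.haarAddCircle := by
      rw [← hpars]; congr 1; funext n; rw [hreprF n]
    have h2 : ∫ t : AddCircle L, ‖F t‖ ^ 2 ∂AddCircle.haarAddCircle
        = ∫ t : AddCircle L, ‖H t‖ ^ 2 ∂AddCircle.haarAddCircle := by
      apply MeasureTheory.integral_congr_ae
      filter_upwards [ContinuousMap.coeFn_toLp (p := 2) AddCircle.haarAddCircle (𝕜 := ℂ) H] with t ht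
      rw [ht]
    have h3 : ∫ x in (0:ℝ)..L, ‖h x‖ ^ 2
        = ∫ t : AddCircle L, ‖H t‖ ^ 2 ∂(volume : Measure (AddCircle L)) := by
      have h4 := AddCircle.intervalIntegral_preimage (T := L) 0 (fun z => ‖H z‖ ^ 2)
      rw [zero_add] at h4
      rw [← h4]
      apply intervalIntegral.integral_congr
      intro x hx
      rw [Set.uIcc_of_le hL.le] at hx
      show ‖h x‖ ^ 2 = ‖H (x : AddCircle L)‖ ^ 2
      rw [hHcoe x hx]
    have h5 : ∫ t : AddCircle L, ‖H t‖ ^ 2 ∂(volume : Measure (AddCircle L))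
        = L * ∫ t : AddCircle L, ‖H t‖ ^ 2 ∂AddCircle.haarAddCircle := by
      rw [AddCircle.volume_eq_smul_haarAddCircle, MeasureTheory.integral_smul_measure,
        ENNReal.toReal_ofReal hL.le, smul_eq_mul]
    rw [h1, h2, h3, h5]

lemma wirtinger {L : ℝ} (hL : 0 < L) {g g' : ℝ → ℝ}
    (hg : ∀ x, HasDerivAt g (g' x) x) (hg'c : Continuous g')
    (hper : ∀ x, g (x + L) = g x)
    (hmean : (∫ x in (0:ℝ)..L, g x) = 0) :
    4 * Real.pi ^ 2 / L ^ 2 * ∫ x in (0:ℝ)..L, g x ^ 2 ≤ ∫ x in (0:ℝ)..L, g' x ^ 2 := by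
  haveI : Fact (0 < L) := ⟨hL⟩
  have hgc : Continuous g := by
    rw [continuous_iff_continuousAt]; exact fun x => (hg x).continuousAt
  -- complexifications
  set gc : ℝ → ℂ := fun x => (g x : ℂ) with hgcdef
  set gc' : ℝ → ℂ := fun x => (g' x : ℂ) with hgc'def
  have hgcd : ∀ x, HasDerivAt gc (gc' x) x := fun x => (hg x).ofReal_comp
  have hgccont : Continuous gc := Complex.continuous_ofReal.comp hgc
  have hgc'cont : Continuous gc' := Complex.continuous_ofReal.comp hg'c
  have hgcper : ∀ x, gc (x + L) = gc x := fun x => by simp [hgcdef, hper x]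
  have hgc'per : ∀ x, gc' (x + L) = gc' x := by
    intro x
    have h1 : HasDerivAt (fun y => g (y + L)) (g' (x + L) * 1) x :=
      (hg (x + L)).comp x ((hasDerivAt_id x).add_const L)
    rw [mul_one] at h1
    rw [funext hper] at h1
    simp only [hgc'def]
    rw [h1.unique (hg x)]
  set c : ℤ → ℂ := fun n => fourierCoeffOn hL gc n with hc
  set d : ℤ → ℂ := fun n => fourierCoeffOn hL gc' n with hd
  have hgcLO : gc L = gc 0 := by rw [← hgcper 0, zero_add]
  -- the coefficient relation
  have hreln : ∀ n : ℤ, n ≠ 0 → L * ‖d n‖ = 2 * π * |(n : ℝ)| * ‖c n‖ := by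
    intro n hn
    have hrel := fourierCoeffOn_of_hasDerivAt hL hn (fun x _ => hgcd x)
      (hgc'cont.intervalIntegrable 0 L)
    have hπ : ((π : ℝ) : ℂ) ≠ 0 := Complex.ofReal_ne_zero.mpr Real.pi_ne_zero
    have hnn : ((n : ℤ) : ℂ) ≠ 0 := Int.cast_ne_zero.mpr hn
    have key : (2 * (π : ℂ) * Complex.I * (n : ℂ)) * c n = (L : ℂ) * d n := by
      rw [hc]
      simp only [hrel, hgcLO, sub_self, mul_zero, zero_sub, Complex.ofReal_zero, sub_zero]
      field_simp [hπ, hnn, Complex.I_ne_zero]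
      rfl
    have hnorm := congrArg norm key
    simp only [norm_mul, Complex.norm_I, Complex.norm_real, Complex.norm_intCast,
      Complex.norm_ofNat, Real.norm_eq_abs, abs_of_pos pi_pos, abs_of_pos hL, mul_one] at hnorm
    rw [← hnorm]
  -- zeroth coefficient vanishes
  have hc0 : c 0 = 0 := by
    rw [hc]
    simp only [fourierCoeffOn_eq_integral, neg_zero, fourier_zero, one_smul, sub_zero,
      Complex.ofReal_zero]
    rw [intervalIntegral.integral_ofReal, hmean]
    simp
  obtain ⟨S1, P1⟩ := parseval_periodic hL gc hgccont hgcper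
  obtain ⟨S2, P2⟩ := parseval_periodic hL gc' hgc'cont hgc'per
  have hterm : ∀ n : ℤ, 4 * π ^ 2 / L ^ 2 * ‖c n‖ ^ 2 ≤ ‖d n‖ ^ 2 := by
    intro n
    rcases eq_or_ne n 0 with rfl | hn
    · rw [hc0]
      simp
    · have h1 := hreln n hn
      have h2 : (1 : ℝ) ≤ |(n : ℝ)| := by exact_mod_cast Int.one_le_abs hn
      have h3 : (0:ℝ) ≤ ‖c n‖ := norm_nonneg _
      have h4 : (0:ℝ) ≤ ‖d n‖ := norm_nonneg _
      have h5 : (L * ‖d n‖) ^ 2 = (2 * π * |(n:ℝ)| * ‖c n‖) ^ 2 := by rw [h1]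
      have h6 : ‖c n‖ ^ 2 ≤ |(n:ℝ)| ^ 2 * ‖c n‖ ^ 2 := by
        nlinarith [mul_le_mul h2 h2 (by norm_num : (0:ℝ) ≤ 1) (abs_nonneg ((n:ℝ))),
          sq_nonneg (‖c n‖)]
      rw [div_mul_eq_mul_div, div_le_iff₀ (by positivity)]
      nlinarith [h5, h6, pi_pos, sq_nonneg (‖c n‖), sq_nonneg (‖d n‖)]
  have hsq : (∫ x in (0:ℝ)..L, g x ^ 2) = L * ∑' n : ℤ, ‖c n‖ ^ 2 := by
    simp only [hc]
    rw [P1]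
    apply intervalIntegral.integral_congr
    intro x _
    simp [hgcdef, Complex.norm_real, sq_abs]
  have hsq' : (∫ x in (0:ℝ)..L, g' x ^ 2) = L * ∑' n : ℤ, ‖d n‖ ^ 2 := by
    simp only [hd]
    rw [P2]
    apply intervalIntegral.integral_congr
    intro x _
    simp [hgc'def, Complex.norm_real, sq_abs]
  rw [hsq, hsq']
  have hsum_le : ∑' n : ℤ, 4 * π ^ 2 / L ^ 2 * ‖c n‖ ^ 2 ≤ ∑' n : ℤ, ‖d n‖ ^ 2 :=
    Summable.tsum_le_tsum hterm (S1.mul_left _) S2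
  rw [tsum_mul_left] at hsum_le
  calc 4 * π ^ 2 / L ^ 2 * (L * ∑' n : ℤ, ‖c n‖ ^ 2)
      = L * (4 * π ^ 2 / L ^ 2 * ∑' n : ℤ, ‖c n‖ ^ 2) := by ring
    _ ≤ L * ∑' n : ℤ, ‖d n‖ ^ 2 := mul_le_mul_of_nonneg_left hsum_le hL.le


lemma hasDerivAt_param_integral {L t₀ δ : ℝ} (hL : 0 < L) (hδ : 0 < δ)
    {g gt : ℝ → ℝ → ℝ}
    (hg : ContinuousOn (fun q : ℝ × ℝ => g q.1 q.2) (Icc 0 L ×ˢ Icc (t₀ - δ) (t₀ + δ)))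
    (hgt : ContinuousOn (fun q : ℝ × ℝ => gt q.1 q.2) (Icc 0 L ×ˢ Icc (t₀ - δ) (t₀ + δ)))
    (hdiff : ∀ x ∈ Icc (0:ℝ) L, ∀ s ∈ Metric.ball t₀ δ, HasDerivAt (fun r => g x r) (gt x s) s) :
    HasDerivAt (fun s => ∫ x in (0:ℝ)..L, g x s) (∫ x in (0:ℝ)..L, gt x t₀) t₀ := by
  obtain ⟨M, hM⟩ := IsCompact.exists_bound_of_continuousOn
    (isCompact_Icc.prod isCompact_Icc) hgt
  have hIoc : Set.uIoc (0:ℝ) L ⊆ Icc 0 L := by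
    rw [uIoc_of_le hL.le]; exact Ioc_subset_Icc_self
  have hball : Metric.ball t₀ (δ/2) ⊆ Icc (t₀ - δ) (t₀ + δ) := by
    intro s hs
    rw [Metric.mem_ball, Real.dist_eq, abs_sub_lt_iff] at hs
    constructor <;> linarith [hs.1, hs.2]
  have hball' : Metric.ball t₀ (δ/2) ⊆ Metric.ball t₀ δ :=
    Metric.ball_subset_ball (by linarith)
  have ht₀ : t₀ ∈ Icc (t₀ - δ) (t₀ + δ) := by
    constructor <;> linarith
  have hsliceg : ∀ s ∈ Icc (t₀ - δ) (t₀ + δ), ContinuousOn (fun x => g x s) (Icc 0 L) := by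
    intro s hs
    have : ContinuousOn (fun x : ℝ => ((x, s) : ℝ × ℝ)) (Icc 0 L) :=
      (continuous_id.prodMk continuous_const).continuousOn
    exact hg.comp this (fun x hx => ⟨hx, hs⟩)
  have hslicegt : ∀ s ∈ Icc (t₀ - δ) (t₀ + δ), ContinuousOn (fun x => gt x s) (Icc 0 L) := by
    intro s hs
    have : ContinuousOn (fun x : ℝ => ((x, s) : ℝ × ℝ)) (Icc 0 L) :=
      (continuous_id.prodMk continuous_const).continuousOn
    exact hgt.comp this (fun x hx => ⟨hx, hs⟩)
  refine (intervalIntegral.hasDerivAt_integral_of_dominated_loc_of_deriv_le (𝕜 := ℝ) (μ := MeasureTheory.volume) (F := fun s x => g x s) (F' := fun s x => gt x s) (s := Metric.ball t₀ (δ/2))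
      (bound := fun _ => M) (Metric.ball_mem_nhds t₀ (half_pos hδ)) ?_ ?_ ?_ ?_ ?_ ?_).2
  · filter_upwards [Metric.ball_mem_nhds t₀ (half_pos hδ)] with s hs
    exact ((hsliceg s (hball hs)).mono hIoc).aestronglyMeasurable measurableSet_uIoc
  · apply ContinuousOn.intervalIntegrable
    rw [Set.uIcc_of_le hL.le]
    exact hsliceg t₀ ht₀
  · exact ((hslicegt t₀ ht₀).mono hIoc).aestronglyMeasurable measurableSet_uIoc
  · apply Filter.Eventually.of_forall
    intro x hx s hs
    exact hM (x, s) ⟨hIoc hx, hball hs⟩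
  · exact intervalIntegrable_const
  · apply Filter.Eventually.of_forall
    intro x hx s hs
    exact hdiff x (hIoc hx) s (hball' hs)

end Helpers

lemma deriv_periodic {L : ℝ} {f f' : ℝ → ℝ} (hf : ∀ x, HasDerivAt f (f' x) x)
    (hp : ∀ x, f (x + L) = f x) (x : ℝ) : f' (x + L) = f' x := by
  have h1 : HasDerivAt (fun y => f (y + L)) (f' (x + L) * 1) x :=
    (hf (x + L)).comp x ((hasDerivAt_id x).add_const L)
  rw [mul_one] at h1
  rw [funext hp] at h1
  exact h1.unique (hf x)

/-- Heat-flow monotonicity behind the logarithmic Sobolev inequality on the circle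
of length `L`: for a smooth positive solution `v` (here `v x t`, `L`-periodic in `x`)
of the heat equation `v_t = v_xx`, normalized by `(1/L)∫₀ᴸ v(x,0) dx = 1`, the
function `f(t) = ∫₀ᴸ ((√v)_x)² dx − (2π²/L²)∫₀ᴸ v log v dx` is non-increasing on
`[0, ∞)`; indeed `f'(t) ≤ −(2/3)∫₀ᴸ ((√v)_x)⁴ / v dx ≤ 0` for all `t ≥ 0`. -/
theorem heat_flow_monotonicity_logsob (L : ℝ) (hL : 0 < L) (v : ℝ → ℝ → ℝ)
    (hsmooth : ContDiff ℝ (⊤ : ℕ∞) (fun q : ℝ × ℝ => v q.1 q.2))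
    (hper : ∀ x t : ℝ, 0 ≤ t → v (x + L) t = v x t)
    (hpos : ∀ x t : ℝ, 0 ≤ t → 0 < v x t)
    (hheat : ∀ x t : ℝ, 0 ≤ t →
      deriv (fun s => v x s) t = iteratedDeriv 2 (fun y => v y t) x)
    (hnorm : (1 / L) * ∫ x in (0:ℝ)..L, v x 0 = 1) :
    AntitoneOn
      (fun t => (∫ x in (0:ℝ)..L, (deriv (fun y => Real.sqrt (v y t)) x) ^ 2)
        - (2 * Real.pi ^ 2 / L ^ 2) * ∫ x in (0:ℝ)..L, v x t * Real.log (v x t))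
      (Set.Ici 0) ∧
    ∀ t : ℝ, 0 ≤ t →
      deriv (fun s => (∫ x in (0:ℝ)..L, (deriv (fun y => Real.sqrt (v y s)) x) ^ 2)
          - (2 * Real.pi ^ 2 / L ^ 2) *
            ∫ x in (0:ℝ)..L, v x s * Real.log (v x s)) t
        ≤ -(2 / 3) *
            ∫ x in (0:ℝ)..L, (deriv (fun y => Real.sqrt (v y t)) x) ^ 4 / v x t ∧
      -(2 / 3) *
          (∫ x in (0:ℝ)..L, (deriv (fun y => Real.sqrt (v y t)) x) ^ 4 / v x t)
        ≤ 0 := by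
  have hπ := Real.pi_pos
  set c : ℝ := 2 * Real.pi ^ 2 / L ^ 2 with hcdef
  set u : ℝ × ℝ → ℝ := fun q => v q.1 q.2 with hudef
  set A : ℝ × ℝ → ℝ := fun q => fderiv ℝ u q (1, 0) with hAdef
  set Vt : ℝ × ℝ → ℝ := fun q => fderiv ℝ u q (0, 1) with hVtdef
  have hAsm : ContDiff ℝ (⊤:ℕ∞) A := contDiff_pderiv hsmooth _
  have hVtsm : ContDiff ℝ (⊤:ℕ∞) Vt := contDiff_pderiv hsmooth _
  set B : ℝ × ℝ → ℝ := fun q => fderiv ℝ A q (1, 0) with hBdef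
  set At : ℝ × ℝ → ℝ := fun q => fderiv ℝ A q (0, 1) with hAtdef
  have hBsm : ContDiff ℝ (⊤:ℕ∞) B := contDiff_pderiv hAsm _
  have hAtsm : ContDiff ℝ (⊤:ℕ∞) At := contDiff_pderiv hAsm _
  set C3 : ℝ × ℝ → ℝ := fun q => fderiv ℝ B q (1, 0) with hC3def
  have hC3sm : ContDiff ℝ (⊤:ℕ∞) C3 := contDiff_pderiv hBsm _
  have hA : ∀ x s : ℝ, HasDerivAt (fun y => v y s) (A (x, s)) x := fun x s =>
    hasDerivAt_slice_fst hsmooth x s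
  have hVt : ∀ x s : ℝ, HasDerivAt (fun r => v x r) (Vt (x, s)) s := fun x s =>
    hasDerivAt_slice_snd hsmooth x s
  have hB : ∀ x s : ℝ, HasDerivAt (fun y => A (y, s)) (B (x, s)) x := fun x s =>
    hasDerivAt_slice_fst hAsm x s
  have hAt : ∀ x s : ℝ, HasDerivAt (fun r => A (x, r)) (At (x, s)) s := fun x s =>
    hasDerivAt_slice_snd hAsm x s
  have hC3 : ∀ x s : ℝ, HasDerivAt (fun y => B (y, s)) (C3 (x, s)) x := fun x s =>
    hasDerivAt_slice_fst hBsm x s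
  -- heat equation in terms of the partial derivatives
  have hheat' : ∀ x (t : ℝ), 0 ≤ t → Vt (x, t) = B (x, t) := by
    intro x t ht
    have h1 : deriv (fun s => v x s) t = Vt (x, t) := (hVt x t).deriv
    have h2 : iteratedDeriv 2 (fun y => v y t) x = B (x, t) := by
      have e1 : iteratedDeriv 2 (fun y => v y t) = deriv (deriv (fun y => v y t)) := by
        have : (2 : ℕ) = 1 + 1 := rfl
        rw [this, iteratedDeriv_succ, iteratedDeriv_one]
      rw [e1]
      have e2 : deriv (fun y => v y t) = fun y => A (y, t) := funext fun y => (hA y t).deriv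
      rw [e2]
      exact (hB x t).deriv
    rw [← h1, hheat x t ht, h2]
  -- Clairaut
  have hclair : ∀ x s : ℝ, At (x, s) = fderiv ℝ Vt (x, s) (1, 0) := fun x s =>
    clairaut hsmooth (x, s) (1, 0) (0, 1)
  -- positivity region
  have hposreg : ∃ δ > 0, ∀ p : ℝ × ℝ, p.1 ∈ Icc (0:ℝ) L → -δ ≤ p.2 → 0 < v p.1 p.2 := by
    have hU : IsOpen {q : ℝ × ℝ | 0 < u q} := isOpen_lt continuous_const hsmooth.continuous
    have hK : IsCompact (Icc (0:ℝ) L ×ˢ Icc (0:ℝ) 0) := isCompact_Icc.prod isCompact_Icc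
    have hKU : Icc (0:ℝ) L ×ˢ Icc (0:ℝ) 0 ⊆ {q | 0 < u q} := by
      rintro ⟨x, s⟩ ⟨hx, hs⟩
      have hs0 : s = 0 := le_antisymm hs.2 hs.1
      have := hpos x s (le_of_eq hs0.symm)
      exact this
    obtain ⟨δ, hδpos, hsub⟩ := hK.exists_thickening_subset_open hU hKU
    refine ⟨δ/2, half_pos hδpos, ?_⟩
    rintro ⟨x, s⟩ hx hs
    rcases le_or_gt 0 s with h0 | h0
    · exact hpos x s h0
    · have hd : dist ((x, s) : ℝ × ℝ) ((x, 0) : ℝ × ℝ) = |s| := by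
        simp [Prod.dist_eq, Real.dist_eq]
      have habs : |s| ≤ δ/2 := by
        rw [abs_of_neg h0]; simp at hs ⊢; linarith
      have hmem : ((x, s) : ℝ × ℝ) ∈ Metric.thickening δ (Icc (0:ℝ) L ×ˢ Icc (0:ℝ) 0) := by
        rw [Metric.mem_thickening_iff]
        exact ⟨(x, 0), ⟨hx, by simp⟩, by rw [hd]; linarith⟩
      exact hsub hmem
  -- the central fact: at each t₀ ≥ 0 the function has a derivative bounded as required
  have key : ∀ t₀ : ℝ, 0 ≤ t₀ → ∃ D : ℝ,
      HasDerivAt (fun s => (∫ x in (0:ℝ)..L, (deriv (fun y => Real.sqrt (v y s)) x) ^ 2)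
        - c * ∫ x in (0:ℝ)..L, v x s * Real.log (v x s)) D t₀ ∧
      D ≤ -(2/3) * ∫ x in (0:ℝ)..L, (deriv (fun y => Real.sqrt (v y t₀)) x) ^ 4 / v x t₀ := by
    intro t₀ ht₀
    obtain ⟨δ, hδ, hreg⟩ := hposreg
    have hpos' : ∀ x ∈ Icc (0:ℝ) L, ∀ s : ℝ, t₀ - δ ≤ s → 0 < v x s := by
      intro x hx s hs
      exact hreg (x, s) hx (by linarith)
    -- the integrand and its time derivative
    set g : ℝ → ℝ → ℝ := fun x s => (A (x, s))^2 / (4 * v x s)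
      - c * (v x s * Real.log (v x s)) with hgdef
    set gt : ℝ → ℝ → ℝ := fun x s =>
      (A (x, s) * At (x, s) / (2 * v x s) - (A (x, s))^2 * Vt (x, s) / (4 * (v x s)^2))
        - c * (Vt (x, s) * (Real.log (v x s) + 1)) with hgtdef
    have hRpos : ∀ q : ℝ × ℝ, q ∈ Icc (0:ℝ) L ×ˢ Icc (t₀ - δ) (t₀ + δ) → 0 < v q.1 q.2 :=
      fun q hq => hpos' q.1 hq.1 q.2 hq.2.1
    have hucont : Continuous u := hsmooth.continuous
    have hvcont : Continuous (fun q : ℝ × ℝ => v q.1 q.2) := hucont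
    have hgcont : ContinuousOn (fun q : ℝ × ℝ => g q.1 q.2)
        (Icc (0:ℝ) L ×ˢ Icc (t₀ - δ) (t₀ + δ)) := by
      apply ContinuousOn.sub
      · apply ContinuousOn.div
        · exact (hAsm.continuous.continuousOn).pow 2
        · exact continuousOn_const.mul hvcont.continuousOn
        · intro q hq; have := hRpos q hq; positivity
      · exact continuousOn_const.mul (hvcont.continuousOn.mul
          (ContinuousOn.log hvcont.continuousOn (fun q hq => (hRpos q hq).ne')))
    have hgtcont : ContinuousOn (fun q : ℝ × ℝ => gt q.1 q.2)
        (Icc (0:ℝ) L ×ˢ Icc (t₀ - δ) (t₀ + δ)) := by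
      apply ContinuousOn.sub
      · apply ContinuousOn.sub
        · apply ContinuousOn.div
          · exact hAsm.continuous.continuousOn.mul hAtsm.continuous.continuousOn
          · exact continuousOn_const.mul hvcont.continuousOn
          · intro q hq; have := hRpos q hq; positivity
        · apply ContinuousOn.div
          · exact (hAsm.continuous.continuousOn.pow 2).mul hVtsm.continuous.continuousOn
          · exact continuousOn_const.mul (hvcont.continuousOn.pow 2)
          · intro q hq; have := hRpos q hq; positivity
      · exact continuousOn_const.mul (hVtsm.continuous.continuousOn.mul
          ((ContinuousOn.log hvcont.continuousOn (fun q hq => (hRpos q hq).ne')).add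
            continuousOn_const))
    have hgderiv : ∀ x ∈ Icc (0:ℝ) L, ∀ s ∈ Metric.ball t₀ δ,
        HasDerivAt (fun r => g x r) (gt x s) s := by
      intro x hx s hs
      have hsd : t₀ - δ ≤ s := by
        rw [Metric.mem_ball, Real.dist_eq, abs_sub_lt_iff] at hs
        linarith [hs.2]
      have hvps : 0 < v x s := hpos' x hx s hsd
      have h1 : HasDerivAt (fun r => v x r) (Vt (x, s)) s := hVt x s
      have h2 : HasDerivAt (fun r => A (x, r)) (At (x, s)) s := hAt x s
      have hlog : HasDerivAt (fun r => Real.log (v x r)) (Vt (x, s) / v x s) s := by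
        have := (Real.hasDerivAt_log hvps.ne').comp s h1
        simpa [div_eq_inv_mul, mul_comm, Function.comp_def] using this
      have hnum : HasDerivAt (fun r => (A (x, r))^2) (2 * A (x, s) * At (x, s)) s := by
        have := h2.pow 2
        simpa [mul_comm, mul_assoc, Pi.pow_def] using this
      have hden : HasDerivAt (fun r => 4 * v x r) (4 * Vt (x, s)) s := h1.const_mul 4
      have hfrac := hnum.div hden (by positivity)
      have hprod := (h1.mul hlog).const_mul c
      have hcomb := hfrac.sub hprod
      convert hcomb using 1
      · rfl
      · rfl
      · rfl
      rw [hgtdef]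
      field_simp
      ring
    -- identify the target function with ∫ g near t₀
    have hsqderiv : ∀ (s : ℝ), t₀ - δ ≤ s → ∀ x ∈ Icc (0:ℝ) L,
        deriv (fun y => Real.sqrt (v y s)) x = A (x, s) / (2 * Real.sqrt (v x s)) := by
      intro s hsd x hx
      have hvps : 0 < v x s := hpos' x hx s hsd
      have hder : HasDerivAt (fun y => Real.sqrt (v y s))
          (1 / (2 * Real.sqrt (v x s)) * A (x, s)) x :=
        (Real.hasDerivAt_sqrt hvps.ne').comp x (hA x s)
      rw [hder.deriv]
      ring
    have hfeq : ∀ s ∈ Metric.ball t₀ δ,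
        ((∫ x in (0:ℝ)..L, (deriv (fun y => Real.sqrt (v y s)) x) ^ 2)
          - c * ∫ x in (0:ℝ)..L, v x s * Real.log (v x s))
        = ∫ x in (0:ℝ)..L, g x s := by
      intro s hs
      have hsd : t₀ - δ ≤ s := by
        rw [Metric.mem_ball, Real.dist_eq, abs_sub_lt_iff] at hs
        linarith [hs.2]
      have hIccEq : Set.uIcc (0:ℝ) L = Icc 0 L := Set.uIcc_of_le hL.le
      have h1 : (∫ x in (0:ℝ)..L, (deriv (fun y => Real.sqrt (v y s)) x) ^ 2)
          = ∫ x in (0:ℝ)..L, (A (x, s))^2 / (4 * v x s) := by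
        apply intervalIntegral.integral_congr
        intro x hx
        rw [hIccEq] at hx
        have hvps : 0 < v x s := hpos' x hx s hsd
        show (deriv (fun y => Real.sqrt (v y s)) x) ^ 2 = (A (x, s))^2 / (4 * v x s)
        rw [hsqderiv s hsd x hx, div_pow, mul_pow, Real.sq_sqrt hvps.le]
        norm_num
      have hint1 : IntervalIntegrable (fun x => (A (x, s))^2 / (4 * v x s)) volume 0 L := by
        apply ContinuousOn.intervalIntegrable
        rw [hIccEq]
        apply ContinuousOn.div
        · exact ((hAsm.continuous.comp (continuous_id.prodMk continuous_const)).continuousOn).pow 2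
        · exact continuousOn_const.mul
            ((hvcont.comp (continuous_id.prodMk continuous_const)).continuousOn)
        · intro x hx
          have := hpos' x hx s hsd
          positivity
      have hint2 : IntervalIntegrable (fun x => c * (v x s * Real.log (v x s))) volume 0 L := by
        apply ContinuousOn.intervalIntegrable
        rw [hIccEq]
        have hcv : ContinuousOn (fun x => v x s) (Icc (0:ℝ) L) :=
          (hvcont.comp (continuous_id.prodMk continuous_const)).continuousOn
        exact continuousOn_const.mul (hcv.mul
          (ContinuousOn.log hcv (fun x hx => (hpos' x hx s hsd).ne')))
      rw [h1, ← intervalIntegral.integral_const_mul, ← intervalIntegral.integral_sub hint1 hint2]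
    have hmain : HasDerivAt (fun s => ∫ x in (0:ℝ)..L, g x s)
        (∫ x in (0:ℝ)..L, gt x t₀) t₀ :=
      hasDerivAt_param_integral hL hδ hgcont hgtcont hgderiv
    have hf : HasDerivAt (fun s => (∫ x in (0:ℝ)..L, (deriv (fun y => Real.sqrt (v y s)) x) ^ 2)
        - c * ∫ x in (0:ℝ)..L, v x s * Real.log (v x s))
        (∫ x in (0:ℝ)..L, gt x t₀) t₀ := by
      apply hmain.congr_of_eventuallyEq
      filter_upwards [Metric.ball_mem_nhds t₀ hδ] with s hs
      exact hfeq s hs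
    -- time slice at t₀
    set w : ℝ → ℝ := fun x => v x t₀ with hwdef
    set a₀ : ℝ → ℝ := fun x => A (x, t₀) with hadef
    set b₀ : ℝ → ℝ := fun x => B (x, t₀) with hbdef
    set c₀ : ℝ → ℝ := fun x => C3 (x, t₀) with hc₀def
    have hwpos : ∀ x, 0 < w x := fun x => hpos x t₀ ht₀
    have hw : ∀ x, HasDerivAt w (a₀ x) x := fun x => hA x t₀
    have ha : ∀ x, HasDerivAt a₀ (b₀ x) x := fun x => hB x t₀
    have hb : ∀ x, HasDerivAt b₀ (c₀ x) x := fun x => hC3 x t₀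
    have hwcont : Continuous w := hvcont.comp (continuous_id.prodMk continuous_const)
    have hacont : Continuous a₀ := hAsm.continuous.comp (continuous_id.prodMk continuous_const)
    have hbcont : Continuous b₀ := hBsm.continuous.comp (continuous_id.prodMk continuous_const)
    have hccont : Continuous c₀ := hC3sm.continuous.comp (continuous_id.prodMk continuous_const)
    have hwper : ∀ x, w (x + L) = w x := fun x => hper x t₀ ht₀
    have haper : ∀ x, a₀ (x + L) = a₀ x := deriv_periodic hw hwper
    have hbper : ∀ x, b₀ (x + L) = b₀ x := deriv_periodic ha haper
    have hAtC3 : ∀ x, At (x, t₀) = c₀ x := by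
      intro x
      rw [hclair x t₀]
      have h1 : fderiv ℝ Vt (x, t₀) (1, 0) = deriv (fun y => Vt (y, t₀)) x :=
        (hasDerivAt_slice_fst hVtsm x t₀).deriv.symm
      rw [h1]
      have h2 : (fun y => Vt (y, t₀)) = fun y => B (y, t₀) :=
        funext fun y => hheat' y t₀ ht₀
      rw [h2]
      exact (hC3 x t₀).deriv
    set Gt : ℝ → ℝ := fun x => a₀ x * c₀ x / (2 * w x) - a₀ x ^ 2 * b₀ x / (4 * w x ^ 2)
      - c * (b₀ x * (Real.log (w x) + 1)) with hGtdef
    have hgtGt : ∀ x, gt x t₀ = Gt x := by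
      intro x
      rw [hgtdef, hGtdef]
      simp only
      rw [hAtC3 x, hheat' x t₀ ht₀]
    set P : ℝ → ℝ := fun x => a₀ x / (2 * Real.sqrt (w x)) with hPdef
    set P' : ℝ → ℝ := fun x => b₀ x / (2 * Real.sqrt (w x))
      - a₀ x ^ 2 / (4 * w x * Real.sqrt (w x)) with hP'def
    have hsqrtw : ∀ x, HasDerivAt (fun y => Real.sqrt (w y)) (P x) x := by
      intro x
      have h0 := (Real.hasDerivAt_sqrt (hwpos x).ne').comp x (hw x)
      convert h0 using 1
      · rfl
      · rfl
      · rfl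
      rw [hPdef]
      ring
    have hP : ∀ x, HasDerivAt P (P' x) x := by
      intro x
      have hsp : 0 < Real.sqrt (w x) := Real.sqrt_pos.mpr (hwpos x)
      have hden : HasDerivAt (fun y => 2 * Real.sqrt (w y)) (2 * P x) x :=
        (hsqrtw x).const_mul 2
      have h0 := (ha x).div hden (by positivity)
      convert h0 using 1
      · rfl
      · rfl
      · rfl
      rw [hP'def, hPdef]
      simp only
      set sq : ℝ := Real.sqrt (w x) with hsqdef
      have hspos : 0 < sq := Real.sqrt_pos.mpr (hwpos x)
      have hs2 : sq ^ 2 = w x := Real.sq_sqrt (hwpos x).le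
      rw [← hs2]
      field_simp
      ring
    have hPper : ∀ x, P (x + L) = P x := by
      intro x
      rw [hPdef]
      simp only
      rw [haper x, hwper x]
    have hPcont : Continuous P :=
      hacont.div (continuous_const.mul hwcont.sqrt)
        (fun x => by have := Real.sqrt_pos.mpr (hwpos x); positivity)
    have hP'cont : Continuous P' := by
      apply Continuous.sub
      · exact hbcont.div (continuous_const.mul hwcont.sqrt)
          (fun x => by have := Real.sqrt_pos.mpr (hwpos x); positivity)
      · exact (hacont.pow 2).div ((continuous_const.mul hwcont).mul hwcont.sqrt)
          (fun x => by have h1 := Real.sqrt_pos.mpr (hwpos x); have h2 := hwpos x; positivity)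
    have hPint : IntervalIntegrable P volume 0 L := hPcont.intervalIntegrable 0 L
    have hPmean : (∫ x in (0:ℝ)..L, P x) = 0 := by
      rw [intervalIntegral.integral_eq_sub_of_hasDerivAt
        (fun x _ => hsqrtw x) hPint]
      rw [show Real.sqrt (w L) = Real.sqrt (w 0) from by rw [← hwper 0, zero_add], sub_self]
    have hwirt := wirtinger hL hP hP'cont hPper hPmean
    -- the pointwise identity: Gt - R is a perfect derivative
    set B₂ : ℝ → ℝ := fun x => a₀ x * b₀ x / (2 * w x) - a₀ x ^ 3 / (12 * w x ^ 2)
      - c * (a₀ x * (Real.log (w x) + 1)) with hB₂def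
    set R : ℝ → ℝ := fun x => -2 * P' x ^ 2 + 4 * c * P x ^ 2 - (2/3) * P x ^ 4 / w x
      with hRdef
    have hB₂d : ∀ x, HasDerivAt B₂ (Gt x - R x) x := by
      intro x
      have hwx := hwpos x
      have hlogw : HasDerivAt (fun y => Real.log (w y) + 1) (a₀ x / w x) x := by
        have h0 := (Real.hasDerivAt_log hwx.ne').comp x (hw x)
        have h1 : HasDerivAt (fun y => Real.log (w y)) (a₀ x / w x) x := by
          convert h0 using 1
          · rfl
          · rfl
          · rfl
          rw [div_eq_inv_mul]
        exact h1.add_const 1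
      have hd1 := ((ha x).mul (hb x)).div ((hw x).const_mul 2) (by positivity)
      have hd2 := ((ha x).pow 3).div (((hw x).pow 2).const_mul 12) (by simp [hwx.ne'])
      have hd3 := ((ha x).mul hlogw).const_mul c
      have hcomb := (hd1.sub hd2).sub hd3
      convert hcomb using 1
      · rfl
      · rfl
      · rfl
      rw [hGtdef, hRdef, hPdef, hP'def]
      simp only [Pi.pow_apply, Pi.mul_apply]
      set sq : ℝ := Real.sqrt (w x) with hsqdef
      have hspos : 0 < sq := Real.sqrt_pos.mpr hwx
      have hs2 : sq ^ 2 = w x := Real.sq_sqrt hwx.le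
      rw [← hs2]
      field_simp
      ring
    have hGtcont : Continuous Gt := by
      apply Continuous.sub
      · apply Continuous.sub
        · exact (hacont.mul hccont).div (continuous_const.mul hwcont)
            (fun x => by have := hwpos x; positivity)
        · exact ((hacont.pow 2).mul hbcont).div (continuous_const.mul (hwcont.pow 2))
            (fun x => by have := hwpos x; positivity)
      · exact continuous_const.mul (hbcont.mul
          ((hwcont.log (fun x => (hwpos x).ne')).add continuous_const))
    have hRcont : Continuous R := by
      apply Continuous.sub
      · exact (continuous_const.mul (hP'cont.pow 2)).add
          ((continuous_const.mul continuous_const).mul (hPcont.pow 2))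
      · exact (continuous_const.mul (hPcont.pow 4)).div hwcont (fun x => (hwpos x).ne')
    have hFTC : (∫ x in (0:ℝ)..L, (Gt x - R x)) = B₂ L - B₂ 0 :=
      intervalIntegral.integral_eq_sub_of_hasDerivAt (fun x _ => hB₂d x)
        ((hGtcont.sub hRcont).intervalIntegrable 0 L)
    have hB₂per : B₂ L = B₂ 0 := by
      rw [hB₂def]
      simp only
      rw [show (L:ℝ) = 0 + L from (zero_add L).symm, hwper 0, haper 0, hbper 0]
    have hGtint : IntervalIntegrable Gt volume 0 L := hGtcont.intervalIntegrable 0 L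
    have hRint : IntervalIntegrable R volume 0 L := hRcont.intervalIntegrable 0 L
    have hGtR : (∫ x in (0:ℝ)..L, Gt x) = ∫ x in (0:ℝ)..L, R x := by
      have h0 := hFTC
      rw [intervalIntegral.integral_sub hGtint hRint, hB₂per, sub_self] at h0
      linarith
    -- split ∫ R
    have hP2int : IntervalIntegrable (fun x => P x ^ 2) volume 0 L :=
      (hPcont.pow 2).intervalIntegrable 0 L
    have hP'2int : IntervalIntegrable (fun x => P' x ^ 2) volume 0 L :=
      (hP'cont.pow 2).intervalIntegrable 0 L
    have hP4cont : Continuous (fun x => P x ^ 4 / w x) :=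
      (hPcont.pow 4).div hwcont (fun x => (hwpos x).ne')
    have hP4int : IntervalIntegrable (fun x => P x ^ 4 / w x) volume 0 L :=
      hP4cont.intervalIntegrable 0 L
    have hRsplit : (∫ x in (0:ℝ)..L, R x)
        = -2 * (∫ x in (0:ℝ)..L, P' x ^ 2) + 4 * c * (∫ x in (0:ℝ)..L, P x ^ 2)
          - (2/3) * ∫ x in (0:ℝ)..L, P x ^ 4 / w x := by
      rw [hRdef]
      simp only
      have e1 : (fun x => -2 * P' x ^ 2 + 4 * c * P x ^ 2 - 2/3 * P x ^ 4 / w x)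
          = fun x => ((-2) * P' x ^ 2 + (4 * c) * P x ^ 2) - (2/3) * (P x ^ 4 / w x) := by
        funext x; ring
      calc (∫ x in (0:ℝ)..L, (-2 * P' x ^ 2 + 4 * c * P x ^ 2 - 2/3 * P x ^ 4 / w x))
          = ∫ x in (0:ℝ)..L, (((-2) * P' x ^ 2 + (4 * c) * P x ^ 2) - (2/3) * (P x ^ 4 / w x)) := by
            rw [e1]
        _ = (∫ x in (0:ℝ)..L, ((-2) * P' x ^ 2 + (4 * c) * P x ^ 2))
              - ∫ x in (0:ℝ)..L, (2/3) * (P x ^ 4 / w x) := by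
            apply intervalIntegral.integral_sub
            · exact (hP'2int.const_mul _).add (hP2int.const_mul _)
            · exact hP4int.const_mul _
        _ = ((∫ x in (0:ℝ)..L, (-2) * P' x ^ 2) + ∫ x in (0:ℝ)..L, (4 * c) * P x ^ 2)
              - ∫ x in (0:ℝ)..L, (2/3) * (P x ^ 4 / w x) := by
            rw [intervalIntegral.integral_add (hP'2int.const_mul _) (hP2int.const_mul _)]
        _ = -2 * (∫ x in (0:ℝ)..L, P' x ^ 2) + 4 * c * (∫ x in (0:ℝ)..L, P x ^ 2)
              - (2/3) * ∫ x in (0:ℝ)..L, P x ^ 4 / w x := by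
            rw [intervalIntegral.integral_const_mul, intervalIntegral.integral_const_mul,
              intervalIntegral.integral_const_mul]
    -- Wirtinger bound
    have hwirt2 : 4 * c * (∫ x in (0:ℝ)..L, P x ^ 2) - 2 * (∫ x in (0:ℝ)..L, P' x ^ 2) ≤ 0 := by
      have h2 := mul_le_mul_of_nonneg_left hwirt (by norm_num : (0:ℝ) ≤ 2)
      have h3 : 4 * c * (∫ x in (0:ℝ)..L, P x ^ 2)
          = 2 * (4 * Real.pi ^ 2 / L ^ 2 * ∫ x in (0:ℝ)..L, P x ^ 2) := by
        rw [hcdef]; ring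
      linarith
    -- conclude
    refine ⟨∫ x in (0:ℝ)..L, gt x t₀, hf, ?_⟩
    have hGteq : (∫ x in (0:ℝ)..L, gt x t₀) = ∫ x in (0:ℝ)..L, Gt x :=
      intervalIntegral.integral_congr (fun x _ => hgtGt x)
    have hlast : (∫ x in (0:ℝ)..L, (deriv (fun y => Real.sqrt (v y t₀)) x) ^ 4 / v x t₀)
        = ∫ x in (0:ℝ)..L, P x ^ 4 / w x := by
      apply intervalIntegral.integral_congr
      intro x hx
      rw [Set.uIcc_of_le hL.le] at hx
      show (deriv (fun y => Real.sqrt (v y t₀)) x) ^ 4 / v x t₀ = P x ^ 4 / w x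
      rw [hsqderiv t₀ (by linarith) x hx]
    rw [hGteq, hGtR, hRsplit, hlast]
    linarith
  -- final assembly
  have hnonneg : ∀ t : ℝ, 0 ≤ t →
      0 ≤ ∫ x in (0:ℝ)..L, (deriv (fun y => Real.sqrt (v y t)) x) ^ 4 / v x t := by
    intro t ht
    apply intervalIntegral.integral_nonneg hL.le
    intro x _
    have := hpos x t ht
    positivity
  constructor
  · apply antitoneOn_of_deriv_nonpos (convex_Ici 0)
    · intro t ht
      obtain ⟨D, hD, _⟩ := key t ht
      exact hD.continuousAt.continuousWithinAt
    · rw [interior_Ici]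
      intro t ht
      obtain ⟨D, hD, _⟩ := key t (le_of_lt ht)
      exact hD.differentiableAt.differentiableWithinAt
    · rw [interior_Ici]
      intro t ht
      obtain ⟨D, hD, hDle⟩ := key t (le_of_lt ht)
      rw [hD.deriv]
      have h0 := hnonneg t (le_of_lt ht)
      linarith
  · intro t ht
    obtain ⟨D, hD, hDle⟩ := key t ht
    have h0 := hnonneg t ht
    refine ⟨?_, by linarith⟩
    rw [hD.deriv]
    exact hDle
end
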